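/- arXiv:2604.22317 — 6 statements merged into one kernel-verified Lean document; each statement's English description precedes it below -/
import Mathlib

section
/- There exists a constant C, depending only on T, δ, G₁, G₂ and the essential supremum norms of the coefficients A, B₁, B₂, C, D₁, D₂, Q₁, Q₂, R₁, R₂, such that for every τ ∈ [0,T) and every solution (P₁,P₂) of the scalar ERE on [τ,T], one has sup_{s∈[τ,T]} (P₁(s) + P₂(s)) ≤ C. (A priori estimate in the one-dimensional case with non-degenerate follower diffusion coefficient |D₂| ≥ δ.) -/
set_option linter.unusedVariables false

noncomputable section

namespace ScalarERE

/-- `K(P₂) = (B₂P₂ + D₂P₂C)/(R₂ + D₂²P₂)`. -/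
def Kf (B₂ C D₂ R₂ P₂ : ℝ) : ℝ := (B₂ * P₂ + D₂ * P₂ * C) / (R₂ + D₂ ^ 2 * P₂)

/-- `𝐁(P₂) = B₁ − B₂D₂P₂D₁/(R₂+D₂²P₂)`. -/
def Bb (B₁ B₂ D₁ D₂ R₂ P₂ : ℝ) : ℝ := B₁ - B₂ * D₂ * P₂ * D₁ / (R₂ + D₂ ^ 2 * P₂)

/-- `𝐃(P₂) = D₁ − D₂²P₂D₁/(R₂+D₂²P₂)`. -/
def Dd (D₁ D₂ R₂ P₂ : ℝ) : ℝ := D₁ - D₂ ^ 2 * P₂ * D₁ / (R₂ + D₂ ^ 2 * P₂)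

/-- `Θ̄₁ = −(𝐁P₁ + 𝐃P₁(C − D₂K))/(R₁ + 𝐃²P₁)`. -/
def Th1 (B₁ B₂ C D₁ D₂ R₁ R₂ P₁ P₂ : ℝ) : ℝ :=
  -(Bb B₁ B₂ D₁ D₂ R₂ P₂ * P₁
      + Dd D₁ D₂ R₂ P₂ * P₁ * (C - D₂ * Kf B₂ C D₂ R₂ P₂))
    / (R₁ + (Dd D₁ D₂ R₂ P₂) ^ 2 * P₁)

/-- `Θ₂ = −(B₂P₂ + D₂P₂(C + D₁Θ̄₁))/(R₂+D₂²P₂)`. -/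
def Th2 (B₁ B₂ C D₁ D₂ R₁ R₂ P₁ P₂ : ℝ) : ℝ :=
  -(B₂ * P₂ + D₂ * P₂ * (C + D₁ * Th1 B₁ B₂ C D₁ D₂ R₁ R₂ P₁ P₂))
    / (R₂ + D₂ ^ 2 * P₂)

/-- `𝐀 = A + B₁Θ̄₁ + B₂Θ₂`. -/
def Af (A B₁ B₂ C D₁ D₂ R₁ R₂ P₁ P₂ : ℝ) : ℝ :=
  A + B₁ * Th1 B₁ B₂ C D₁ D₂ R₁ R₂ P₁ P₂ + B₂ * Th2 B₁ B₂ C D₁ D₂ R₁ R₂ P₁ P₂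

/-- `𝐂 = C + D₁Θ̄₁ + D₂Θ₂`. -/
def Cf (A B₁ B₂ C D₁ D₂ R₁ R₂ P₁ P₂ : ℝ) : ℝ :=
  C + D₁ * Th1 B₁ B₂ C D₁ D₂ R₁ R₂ P₁ P₂ + D₂ * Th2 B₁ B₂ C D₁ D₂ R₁ R₂ P₁ P₂

/-- Right-hand side of the `P₂`-equation: `2𝐀P₂ + 𝐂²P₂ + Q₂ + R₂Θ₂²`. -/
def rhs2 (A B₁ B₂ C D₁ D₂ Q₂ R₁ R₂ P₁ P₂ : ℝ) : ℝ :=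
  2 * Af A B₁ B₂ C D₁ D₂ R₁ R₂ P₁ P₂ * P₂
    + (Cf A B₁ B₂ C D₁ D₂ R₁ R₂ P₁ P₂) ^ 2 * P₂
    + Q₂ + R₂ * (Th2 B₁ B₂ C D₁ D₂ R₁ R₂ P₁ P₂) ^ 2

/-- Right-hand side of the `P₁`-equation: `2𝐀P₁ + 𝐂²P₁ + Q₁ + R₁Θ̄₁²`. -/
def rhs1 (A B₁ B₂ C D₁ D₂ Q₁ R₁ R₂ P₁ P₂ : ℝ) : ℝ :=
  2 * Af A B₁ B₂ C D₁ D₂ R₁ R₂ P₁ P₂ * P₁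
    + (Cf A B₁ B₂ C D₁ D₂ R₁ R₂ P₁ P₂) ^ 2 * P₁
    + Q₁ + R₁ * (Th1 B₁ B₂ C D₁ D₂ R₁ R₂ P₁ P₂) ^ 2

/-- A solution of the scalar ERE on `[τ,T]`: continuous nonnegative `P₁, P₂`
satisfying the backward integral equations with terminal values `G₁, G₂`. -/
def IsSolution (A B₁ B₂ C D₁ D₂ Q₁ Q₂ R₁ R₂ : ℝ → ℝ) (G₁ G₂ τ T : ℝ)
    (P₁ P₂ : ℝ → ℝ) : Prop :=
  ContinuousOn P₁ (Set.Icc τ T) ∧ ContinuousOn P₂ (Set.Icc τ T) ∧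
  (∀ s ∈ Set.Icc τ T, 0 ≤ P₁ s ∧ 0 ≤ P₂ s) ∧
  (∀ s ∈ Set.Icc τ T, P₂ s = G₂ + ∫ r in s..T,
    rhs2 (A r) (B₁ r) (B₂ r) (C r) (D₁ r) (D₂ r) (Q₂ r) (R₁ r) (R₂ r) (P₁ r) (P₂ r)) ∧
  (∀ s ∈ Set.Icc τ T, P₁ s = G₁ + ∫ r in s..T,
    rhs1 (A r) (B₁ r) (B₂ r) (C r) (D₁ r) (D₂ r) (Q₁ r) (R₁ r) (R₂ r) (P₁ r) (P₂ r))

/-- Bounded and measurable on `[0,T]`. -/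
def BddMeas (f : ℝ → ℝ) (T : ℝ) : Prop :=
  Measurable f ∧ ∃ M : ℝ, ∀ s ∈ Set.Icc (0 : ℝ) T, |f s| ≤ M

open MeasureTheory Set intervalIntegral

set_option maxHeartbeats 1000000

/-! ### Pointwise bounds -/

section pointwise
variable {δ Ma M₁ M₂ Mc Md₁ Md₂ MQ₁ MQ₂ MR₁ MR₂ : ℝ}
variable {a b₁ b₂ c d₁ d₂ q₁ q₂ r₁ r₂ p₁ p₂ : ℝ}

lemma abs_div_le' {num den cc dd : ℝ} (h : |num| ≤ cc) (hdd : 0 < dd) (hden : dd ≤ den) :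
    |num / den| ≤ cc / dd := by
  rw [abs_div, abs_of_pos (lt_of_lt_of_le hdd hden)]
  exact div_le_div₀ (le_trans (abs_nonneg _) h) h hdd hden

lemma den2_pos (hδ : 0 < δ) (hr₂ : δ ≤ r₂) (hp₂ : 0 ≤ p₂) : 0 < r₂ + d₂ ^ 2 * p₂ := by
  nlinarith [sq_nonneg d₂, mul_nonneg (sq_nonneg d₂) hp₂]

lemma Kf_abs_le (hδ : 0 < δ) (hb₂ : |b₂| ≤ M₂) (hc : |c| ≤ Mc) (hd₂ : |d₂| ≤ Md₂)
    (hr₂ : δ ≤ r₂) (hd₂δ : δ ≤ |d₂|) (hp₂ : 0 ≤ p₂) :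
    |Kf b₂ c d₂ r₂ p₂| ≤ (M₂ + Md₂ * Mc) / δ ^ 2 := by
  have he : 0 < r₂ + d₂ ^ 2 * p₂ := den2_pos hδ hr₂ hp₂
  have hnum : |b₂ * p₂ + d₂ * p₂ * c| ≤ (M₂ + Md₂ * Mc) * p₂ := by
    have : b₂ * p₂ + d₂ * p₂ * c = (b₂ + d₂ * c) * p₂ := by ring
    rw [this, abs_mul, abs_of_nonneg hp₂]
    have h1 : |b₂ + d₂ * c| ≤ M₂ + Md₂ * Mc := by
      calc |b₂ + d₂ * c| ≤ |b₂| + |d₂| * |c| := by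
            rw [← abs_mul]; exact abs_add_le _ _
        _ ≤ M₂ + Md₂ * Mc := by
            have hc0 : (0:ℝ) ≤ Md₂ := le_trans (abs_nonneg _) hd₂
            have := abs_nonneg c
            gcongr
    exact mul_le_mul_of_nonneg_right h1 hp₂
  have hM : 0 ≤ M₂ + Md₂ * Mc := le_trans (abs_nonneg _) (by
    calc |b₂ + d₂ * c| ≤ |b₂| + |d₂| * |c| := by rw [← abs_mul]; exact abs_add_le _ _
      _ ≤ M₂ + Md₂ * Mc := by
          have hc0 : (0:ℝ) ≤ Md₂ := le_trans (abs_nonneg _) hd₂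
          have := abs_nonneg c; gcongr)
  rw [Kf, abs_div, abs_of_pos he]
  have hden : δ ^ 2 * p₂ ≤ r₂ + d₂ ^ 2 * p₂ := by
    have h1 : δ ^ 2 ≤ d₂ ^ 2 := by
      have := sq_abs d₂; nlinarith [abs_nonneg d₂]
    nlinarith
  calc |b₂ * p₂ + d₂ * p₂ * c| / (r₂ + d₂ ^ 2 * p₂)
      ≤ (M₂ + Md₂ * Mc) * p₂ / (r₂ + d₂ ^ 2 * p₂) := by gcongr
    _ ≤ (M₂ + Md₂ * Mc) / δ ^ 2 := by
        rw [div_le_div_iff₀ he (by positivity)]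
        nlinarith

lemma Bb_abs_le (hδ : 0 < δ) (hb₁ : |b₁| ≤ M₁) (hb₂ : |b₂| ≤ M₂) (hd₁ : |d₁| ≤ Md₁)
    (hr₂ : δ ≤ r₂) (hd₂δ : δ ≤ |d₂|) (hp₂ : 0 ≤ p₂) :
    |Bb b₁ b₂ d₁ d₂ r₂ p₂| ≤ M₁ + M₂ * Md₁ / δ := by
  have he : 0 < r₂ + d₂ ^ 2 * p₂ := den2_pos hδ hr₂ hp₂
  have hM₂ : 0 ≤ M₂ := le_trans (abs_nonneg _) hb₂
  have hMd₁ : 0 ≤ Md₁ := le_trans (abs_nonneg _) hd₁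
  have key : |b₂ * d₂ * p₂ * d₁ / (r₂ + d₂ ^ 2 * p₂)| ≤ M₂ * Md₁ / δ := by
    rw [abs_div, abs_of_pos he]
    rw [div_le_div_iff₀ he hδ]
    have h1 : |b₂ * d₂ * p₂ * d₁| = |b₂| * |d₁| * (|d₂| * p₂) := by
      rw [abs_mul, abs_mul, abs_mul, abs_of_nonneg hp₂]; ring
    have h2 : |d₂| * p₂ * δ ≤ r₂ + d₂ ^ 2 * p₂ := by
      have : δ * (|d₂| * p₂) ≤ |d₂| * (|d₂| * p₂) := by
        apply mul_le_mul_of_nonneg_right hd₂δ (by positivity)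
      have hsq : |d₂| * |d₂| = d₂ ^ 2 := by rw [← abs_mul, ← sq, abs_of_nonneg (sq_nonneg d₂)]
      nlinarith
    calc |b₂ * d₂ * p₂ * d₁| * δ = (|b₂| * |d₁|) * (|d₂| * p₂ * δ) := by rw [h1]; ring
      _ ≤ (M₂ * Md₁) * (r₂ + d₂ ^ 2 * p₂) := by
          apply mul_le_mul (by exact mul_le_mul hb₂ hd₁ (abs_nonneg _) hM₂) h2 (by positivity)
            (by positivity)
  calc |Bb b₁ b₂ d₁ d₂ r₂ p₂| ≤ |b₁| + |b₂ * d₂ * p₂ * d₁ / (r₂ + d₂ ^ 2 * p₂)| := by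
        rw [Bb]; exact abs_sub _ _
    _ ≤ M₁ + M₂ * Md₁ / δ := add_le_add hb₁ key

lemma Dd_abs_le (hδ : 0 < δ) (hd₁ : |d₁| ≤ Md₁) (hr₂ : δ ≤ r₂) (hp₂ : 0 ≤ p₂) :
    |Dd d₁ d₂ r₂ p₂| ≤ 2 * Md₁ := by
  have he : 0 < r₂ + d₂ ^ 2 * p₂ := den2_pos hδ hr₂ hp₂
  have hMd₁ : 0 ≤ Md₁ := le_trans (abs_nonneg _) hd₁
  have key : |d₂ ^ 2 * p₂ * d₁ / (r₂ + d₂ ^ 2 * p₂)| ≤ Md₁ := by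
    rw [abs_div, abs_of_pos he, div_le_iff₀ he]
    have h1 : |d₂ ^ 2 * p₂ * d₁| = |d₁| * (d₂ ^ 2 * p₂) := by
      rw [abs_mul, abs_of_nonneg (by positivity : (0:ℝ) ≤ d₂ ^ 2 * p₂)]; ring
    rw [h1]
    nlinarith [mul_nonneg (sq_nonneg d₂) hp₂, abs_nonneg d₁]
  calc |Dd d₁ d₂ r₂ p₂| ≤ |d₁| + |d₂ ^ 2 * p₂ * d₁ / (r₂ + d₂ ^ 2 * p₂)| := by
        rw [Dd]; exact abs_sub _ _
    _ ≤ Md₁ + Md₁ := add_le_add hd₁ key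
    _ = 2 * Md₁ := by ring


lemma den1_pos (hδ : 0 < δ) (hr₁ : δ ≤ r₁) (hp₁ : 0 ≤ p₁) {D : ℝ} :
    0 < r₁ + D ^ 2 * p₁ := by nlinarith [mul_nonneg (sq_nonneg D) hp₁]

/-- bound `|Θ̄₁| ≤ cθ * p₁`. -/
lemma Th1_abs_le (hδ : 0 < δ) (hb₁ : |b₁| ≤ M₁) (hb₂ : |b₂| ≤ M₂) (hc : |c| ≤ Mc)
    (hd₁ : |d₁| ≤ Md₁) (hd₂ : |d₂| ≤ Md₂)
    (hr₁ : δ ≤ r₁) (hr₂ : δ ≤ r₂) (hd₂δ : δ ≤ |d₂|) (hp₁ : 0 ≤ p₁) (hp₂ : 0 ≤ p₂) :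
    |Th1 b₁ b₂ c d₁ d₂ r₁ r₂ p₁ p₂| ≤
      ((M₁ + M₂ * Md₁ / δ) + 2 * Md₁ * (Mc + Md₂ * ((M₂ + Md₂ * Mc) / δ ^ 2))) * p₁ / δ := by
  have hB := Bb_abs_le hδ hb₁ hb₂ hd₁ hr₂ hd₂δ hp₂
  have hD := Dd_abs_le (d₂ := d₂) hδ hd₁ hr₂ hp₂
  have hK := Kf_abs_le hδ hb₂ hc hd₂ hr₂ hd₂δ hp₂
  have hα : 0 < r₁ + (Dd d₁ d₂ r₂ p₂) ^ 2 * p₁ := den1_pos hδ hr₁ hp₁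
  have hc' : |c - d₂ * Kf b₂ c d₂ r₂ p₂| ≤ Mc + Md₂ * ((M₂ + Md₂ * Mc) / δ ^ 2) := by
    calc |c - d₂ * Kf b₂ c d₂ r₂ p₂| ≤ |c| + |d₂| * |Kf b₂ c d₂ r₂ p₂| := by
          rw [← abs_mul]; exact abs_sub _ _
      _ ≤ Mc + Md₂ * ((M₂ + Md₂ * Mc) / δ ^ 2) := by
          have := abs_nonneg (Kf b₂ c d₂ r₂ p₂)
          have h0 : (0:ℝ) ≤ Md₂ := le_trans (abs_nonneg _) hd₂
          gcongr
  have hnum : |Bb b₁ b₂ d₁ d₂ r₂ p₂ * p₁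
      + Dd d₁ d₂ r₂ p₂ * p₁ * (c - d₂ * Kf b₂ c d₂ r₂ p₂)| ≤
      ((M₁ + M₂ * Md₁ / δ) + 2 * Md₁ * (Mc + Md₂ * ((M₂ + Md₂ * Mc) / δ ^ 2))) * p₁ := by
    calc |Bb b₁ b₂ d₁ d₂ r₂ p₂ * p₁ + Dd d₁ d₂ r₂ p₂ * p₁ * (c - d₂ * Kf b₂ c d₂ r₂ p₂)|
        ≤ |Bb b₁ b₂ d₁ d₂ r₂ p₂| * p₁
            + |Dd d₁ d₂ r₂ p₂| * p₁ * |c - d₂ * Kf b₂ c d₂ r₂ p₂| := by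
          calc _ ≤ |Bb b₁ b₂ d₁ d₂ r₂ p₂ * p₁|
              + |Dd d₁ d₂ r₂ p₂ * p₁ * (c - d₂ * Kf b₂ c d₂ r₂ p₂)| := abs_add_le _ _
            _ = _ := by rw [abs_mul, abs_mul, abs_mul, abs_of_nonneg hp₁]
      _ ≤ (M₁ + M₂ * Md₁ / δ) * p₁
            + (2 * Md₁) * p₁ * (Mc + Md₂ * ((M₂ + Md₂ * Mc) / δ ^ 2)) := by
          have h1 : (0:ℝ) ≤ Mc + Md₂ * ((M₂ + Md₂ * Mc) / δ ^ 2) :=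
            le_trans (abs_nonneg _) hc'
          have hMd₁ : (0:ℝ) ≤ Md₁ := le_trans (abs_nonneg _) hd₁
          have t1 : |Bb b₁ b₂ d₁ d₂ r₂ p₂| * p₁ ≤ (M₁ + M₂ * Md₁ / δ) * p₁ :=
            mul_le_mul_of_nonneg_right hB hp₁
          have t2 : |Dd d₁ d₂ r₂ p₂| * p₁ * |c - d₂ * Kf b₂ c d₂ r₂ p₂|
              ≤ (2 * Md₁) * p₁ * (Mc + Md₂ * ((M₂ + Md₂ * Mc) / δ ^ 2)) :=
            mul_le_mul (mul_le_mul_of_nonneg_right hD hp₁) hc' (abs_nonneg _)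
              (mul_nonneg (by linarith) hp₁)
          linarith
      _ = _ := by ring
  rw [Th1, abs_div, abs_neg, abs_of_pos hα]
  have hden : δ ≤ r₁ + (Dd d₁ d₂ r₂ p₂) ^ 2 * p₁ := by
    nlinarith [mul_nonneg (sq_nonneg (Dd d₁ d₂ r₂ p₂)) hp₁]
  calc |Bb b₁ b₂ d₁ d₂ r₂ p₂ * p₁ + Dd d₁ d₂ r₂ p₂ * p₁ * (c - d₂ * Kf b₂ c d₂ r₂ p₂)|
        / (r₁ + Dd d₁ d₂ r₂ p₂ ^ 2 * p₁)
      ≤ (((M₁ + M₂ * Md₁ / δ) + 2 * Md₁ * (Mc + Md₂ * ((M₂ + Md₂ * Mc) / δ ^ 2))) * p₁) / δ :=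
        div_le_div₀ (le_trans (abs_nonneg _) hnum) hnum hδ hden

/-- The key a priori inequality for `rhs1`. -/
lemma rhs1_le (hδ : 0 < δ) (ha : |a| ≤ Ma) (hb₂ : |b₂| ≤ M₂) (hc : |c| ≤ Mc) (hd₂ : |d₂| ≤ Md₂)
    (hr₁ : δ ≤ r₁) (hr₂ : δ ≤ r₂) (hd₂δ : δ ≤ |d₂|) (hp₁ : 0 ≤ p₁) (hp₂ : 0 ≤ p₂) :
    rhs1 a b₁ b₂ c d₁ d₂ q₁ r₁ r₂ p₁ p₂ ≤
      (2 * (Ma + M₂ * ((M₂ + Md₂ * Mc) / δ ^ 2))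
        + (Mc + Md₂ * ((M₂ + Md₂ * Mc) / δ ^ 2)) ^ 2) * p₁ + q₁ := by
  have he : 0 < r₂ + d₂ ^ 2 * p₂ := den2_pos hδ hr₂ hp₂
  have he' : r₂ + d₂ ^ 2 * p₂ ≠ 0 := ne_of_gt he
  set K := Kf b₂ c d₂ r₂ p₂ with hKdef
  set B := Bb b₁ b₂ d₁ d₂ r₂ p₂ with hBdef
  set D := Dd d₁ d₂ r₂ p₂ with hDdef
  set θ := Th1 b₁ b₂ c d₁ d₂ r₁ r₂ p₁ p₂ with hθdef
  have hAf : Af a b₁ b₂ c d₁ d₂ r₁ r₂ p₁ p₂ = (a - b₂ * K) + B * θ := by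
    rw [Af, Th2, hKdef, hBdef, Kf, Bb, ← hθdef]
    field_simp
    ring
  have hCf : Cf a b₁ b₂ c d₁ d₂ r₁ r₂ p₁ p₂ = (c - d₂ * K) + D * θ := by
    rw [Cf, Th2, hKdef, hDdef, Kf, Dd, ← hθdef]
    field_simp
    ring
  have hα : 0 < r₁ + D ^ 2 * p₁ := den1_pos hδ hr₁ hp₁
  have hθeq : θ = -(B * p₁ + D * p₁ * (c - d₂ * K)) / (r₁ + D ^ 2 * p₁) := rfl
  set b : ℝ := B * p₁ + D * p₁ * (c - d₂ * K) with hbdef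
  have hquad : (r₁ + D ^ 2 * p₁) * θ ^ 2 + 2 * b * θ ≤ 0 := by
    have : (r₁ + D ^ 2 * p₁) * θ ^ 2 + 2 * b * θ = -(b ^ 2 / (r₁ + D ^ 2 * p₁)) := by
      rw [hθeq]; field_simp; ring
    rw [this]
    exact neg_nonpos.mpr (div_nonneg (sq_nonneg _) hα.le)
  have hexp : rhs1 a b₁ b₂ c d₁ d₂ q₁ r₁ r₂ p₁ p₂ =
      2 * (a - b₂ * K) * p₁ + (c - d₂ * K) ^ 2 * p₁ + q₁
        + ((r₁ + D ^ 2 * p₁) * θ ^ 2 + 2 * b * θ) := by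
    rw [rhs1, hAf, hCf, ← hθdef, hbdef]; ring
  rw [hexp]
  clear_value K B D θ b
  have hK := Kf_abs_le hδ hb₂ hc hd₂ hr₂ hd₂δ hp₂
  rw [← hKdef] at hK
  have h1 : a - b₂ * K ≤ Ma + M₂ * ((M₂ + Md₂ * Mc) / δ ^ 2) := by
    have hM₂ : (0:ℝ) ≤ M₂ := le_trans (abs_nonneg _) hb₂
    have : |a - b₂ * K| ≤ Ma + M₂ * ((M₂ + Md₂ * Mc) / δ ^ 2) := by
      calc |a - b₂ * K| ≤ |a| + |b₂| * |K| := by rw [← abs_mul]; exact abs_sub _ _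
        _ ≤ _ := add_le_add ha (mul_le_mul hb₂ hK (abs_nonneg _) hM₂)
    linarith [le_abs_self (a - b₂ * K)]
  have h2 : (c - d₂ * K) ^ 2 ≤ (Mc + Md₂ * ((M₂ + Md₂ * Mc) / δ ^ 2)) ^ 2 := by
    have habs : |c - d₂ * K| ≤ Mc + Md₂ * ((M₂ + Md₂ * Mc) / δ ^ 2) := by
      calc |c - d₂ * K| ≤ |c| + |d₂| * |K| := by rw [← abs_mul]; exact abs_sub _ _
        _ ≤ _ := by
          have h0 : (0:ℝ) ≤ Md₂ := le_trans (abs_nonneg _) hd₂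
          exact add_le_add hc (mul_le_mul hd₂ hK (abs_nonneg _) h0)
    calc (c - d₂ * K) ^ 2 = |c - d₂ * K| ^ 2 := (sq_abs _).symm
      _ ≤ _ := pow_le_pow_left₀ (abs_nonneg _) habs 2
  linarith [hquad, mul_le_mul_of_nonneg_right h1 hp₁, mul_le_mul_of_nonneg_right h2 hp₁]


/-- The key a priori inequality for `rhs2`, given a bound `Mθ` on `|Θ̄₁|`. -/
lemma rhs2_le {Mθ : ℝ} (hδ : 0 < δ) (ha : |a| ≤ Ma) (hb₁ : |b₁| ≤ M₁) (hb₂ : |b₂| ≤ M₂)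
    (hc : |c| ≤ Mc) (hd₁ : |d₁| ≤ Md₁) (hr₂M : |r₂| ≤ MR₂)
    (hr₂ : δ ≤ r₂) (hd₂δ : δ ≤ |d₂|) (hp₂ : 0 ≤ p₂)
    (hθM : |Th1 b₁ b₂ c d₁ d₂ r₁ r₂ p₁ p₂| ≤ Mθ) :
    rhs2 a b₁ b₂ c d₁ d₂ q₂ r₁ r₂ p₁ p₂ ≤
      (2 * (Ma + M₁ * Mθ) + 2 * M₂ * (Md₁ / δ) * Mθ + Mc ^ 2) * p₂
        + q₂ + MR₂ * (Md₁ / δ) ^ 2 * Mθ ^ 2 := by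
  have hα : 0 < r₂ + d₂ ^ 2 * p₂ := den2_pos hδ hr₂ hp₂
  have hα' : r₂ + d₂ ^ 2 * p₂ ≠ 0 := ne_of_gt hα
  have hd₂0 : d₂ ≠ 0 := by
    intro h; rw [h] at hd₂δ; simp at hd₂δ; linarith
  set θ := Th1 b₁ b₂ c d₁ d₂ r₁ r₂ p₁ p₂ with hθdef
  set Θ := Th2 b₁ b₂ c d₁ d₂ r₁ r₂ p₁ p₂ with hΘdef
  set b' : ℝ := b₂ * p₂ + d₂ * p₂ * (c + d₁ * θ) with hb'def
  have hΘeq : Θ = -b' / (r₂ + d₂ ^ 2 * p₂) := rfl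
  set t : ℝ := -(d₁ / d₂) * θ with htdef
  clear_value θ Θ b' t
  have hexp : rhs2 a b₁ b₂ c d₁ d₂ q₂ r₁ r₂ p₁ p₂ =
      2 * (a + b₁ * θ) * p₂ + (c + d₁ * θ) ^ 2 * p₂ + q₂
        + ((r₂ + d₂ ^ 2 * p₂) * Θ ^ 2 + 2 * b' * Θ) := by
    rw [rhs2, Af, Cf, ← hθdef, ← hΘdef, hb'def]; ring
  have hmin : (r₂ + d₂ ^ 2 * p₂) * Θ ^ 2 + 2 * b' * Θ ≤
      (r₂ + d₂ ^ 2 * p₂) * t ^ 2 + 2 * b' * t := by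
    have hv : (r₂ + d₂ ^ 2 * p₂) * Θ ^ 2 + 2 * b' * Θ = -(b' ^ 2 / (r₂ + d₂ ^ 2 * p₂)) := by
      rw [hΘeq]; field_simp; ring
    have hkey : 0 ≤ (r₂ + d₂ ^ 2 * p₂) * t ^ 2 + 2 * b' * t + b' ^ 2 / (r₂ + d₂ ^ 2 * p₂) := by
      have : (r₂ + d₂ ^ 2 * p₂) * t ^ 2 + 2 * b' * t + b' ^ 2 / (r₂ + d₂ ^ 2 * p₂)
          = ((r₂ + d₂ ^ 2 * p₂) * t + b') ^ 2 / (r₂ + d₂ ^ 2 * p₂) := by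
        field_simp; ring
      rw [this]; positivity
    linarith
  have hid : 2 * (a + b₁ * θ) * p₂ + (c + d₁ * θ) ^ 2 * p₂ + q₂
        + ((r₂ + d₂ ^ 2 * p₂) * t ^ 2 + 2 * b' * t)
      = (2 * (a + b₁ * θ) - 2 * b₂ * (d₁ / d₂) * θ + c ^ 2) * p₂ + q₂
        + r₂ * (d₁ / d₂) ^ 2 * θ ^ 2 := by
    rw [htdef, hb'def]; field_simp; ring
  have hMθ0 : 0 ≤ Mθ := le_trans (abs_nonneg _) hθM
  have hM₁0 : 0 ≤ M₁ := le_trans (abs_nonneg _) hb₁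
  have hM₂0 : 0 ≤ M₂ := le_trans (abs_nonneg _) hb₂
  have hMd₁0 : 0 ≤ Md₁ := le_trans (abs_nonneg _) hd₁
  have hMR₂0 : 0 ≤ MR₂ := le_trans (abs_nonneg _) hr₂M
  have hdd : |d₁ / d₂| ≤ Md₁ / δ := by
    rw [abs_div]; exact div_le_div₀ hMd₁0 hd₁ hδ hd₂δ
  have hX : 2 * (a + b₁ * θ) - 2 * b₂ * (d₁ / d₂) * θ + c ^ 2
      ≤ 2 * (Ma + M₁ * Mθ) + 2 * M₂ * (Md₁ / δ) * Mθ + Mc ^ 2 := by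
    have h1 : a + b₁ * θ ≤ Ma + M₁ * Mθ := by
      have : |a + b₁ * θ| ≤ Ma + M₁ * Mθ := by
        calc |a + b₁ * θ| ≤ |a| + |b₁| * |θ| := by rw [← abs_mul]; exact abs_add_le _ _
          _ ≤ _ := add_le_add ha (mul_le_mul hb₁ hθM (abs_nonneg _) hM₁0)
      linarith [le_abs_self (a + b₁ * θ)]
    have h2 : -(2 * b₂ * (d₁ / d₂) * θ) ≤ 2 * M₂ * (Md₁ / δ) * Mθ := by
      have habs : |b₂ * (d₁ / d₂) * θ| ≤ M₂ * (Md₁ / δ) * Mθ := by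
        rw [abs_mul, abs_mul]
        exact mul_le_mul (mul_le_mul hb₂ hdd (abs_nonneg _) hM₂0) hθM (abs_nonneg _)
          (by positivity)
      have := neg_abs_le (b₂ * (d₁ / d₂) * θ)
      linarith
    have h3 : c ^ 2 ≤ Mc ^ 2 := by
      calc c ^ 2 = |c| ^ 2 := (sq_abs _).symm
        _ ≤ _ := pow_le_pow_left₀ (abs_nonneg _) hc 2
    linarith
  have h4 : r₂ * (d₁ / d₂) ^ 2 * θ ^ 2 ≤ MR₂ * (Md₁ / δ) ^ 2 * Mθ ^ 2 := by
    have hr₂' : r₂ ≤ MR₂ := le_trans (le_abs_self _) hr₂M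
    have hq1 : (d₁ / d₂) ^ 2 ≤ (Md₁ / δ) ^ 2 := by
      calc (d₁ / d₂) ^ 2 = |d₁ / d₂| ^ 2 := (sq_abs _).symm
        _ ≤ _ := pow_le_pow_left₀ (abs_nonneg _) hdd 2
    have hq2 : θ ^ 2 ≤ Mθ ^ 2 := by
      calc θ ^ 2 = |θ| ^ 2 := (sq_abs _).symm
        _ ≤ _ := pow_le_pow_left₀ (abs_nonneg _) hθM 2
    have := mul_le_mul (mul_le_mul hr₂' hq1 (sq_nonneg _) hMR₂0) hq2 (sq_nonneg _)
      (by positivity)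
    linarith
  calc rhs2 a b₁ b₂ c d₁ d₂ q₂ r₁ r₂ p₁ p₂
      ≤ 2 * (a + b₁ * θ) * p₂ + (c + d₁ * θ) ^ 2 * p₂ + q₂
        + ((r₂ + d₂ ^ 2 * p₂) * t ^ 2 + 2 * b' * t) := by rw [hexp]; linarith
    _ = (2 * (a + b₁ * θ) - 2 * b₂ * (d₁ / d₂) * θ + c ^ 2) * p₂ + q₂
        + r₂ * (d₁ / d₂) ^ 2 * θ ^ 2 := hid
    _ ≤ (2 * (Ma + M₁ * Mθ) + 2 * M₂ * (Md₁ / δ) * Mθ + Mc ^ 2) * p₂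
        + q₂ + MR₂ * (Md₁ / δ) ^ 2 * Mθ ^ 2 := by
      have := mul_le_mul_of_nonneg_right hX hp₂
      linarith


lemma Th2_abs_le {Cp Mθ : ℝ} (hδ : 0 < δ) (hb₂ : |b₂| ≤ M₂) (hc : |c| ≤ Mc)
    (hd₁ : |d₁| ≤ Md₁) (hd₂ : |d₂| ≤ Md₂) (hr₂ : δ ≤ r₂) (hp₂ : 0 ≤ p₂) (hCp : p₂ ≤ Cp)
    (hθM : |Th1 b₁ b₂ c d₁ d₂ r₁ r₂ p₁ p₂| ≤ Mθ) :
    |Th2 b₁ b₂ c d₁ d₂ r₁ r₂ p₁ p₂| ≤ (M₂ * Cp + Md₂ * Cp * (Mc + Md₁ * Mθ)) / δ := by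
  have hα : 0 < r₂ + d₂ ^ 2 * p₂ := den2_pos hδ hr₂ hp₂
  have hden : δ ≤ r₂ + d₂ ^ 2 * p₂ := by nlinarith [mul_nonneg (sq_nonneg d₂) hp₂]
  have hM₂0 : 0 ≤ M₂ := le_trans (abs_nonneg _) hb₂
  have hMd₂0 : 0 ≤ Md₂ := le_trans (abs_nonneg _) hd₂
  have hMd₁0 : 0 ≤ Md₁ := le_trans (abs_nonneg _) hd₁
  have hMθ0 : 0 ≤ Mθ := le_trans (abs_nonneg _) hθM
  have hCp0 : 0 ≤ Cp := le_trans hp₂ hCp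
  set θ := Th1 b₁ b₂ c d₁ d₂ r₁ r₂ p₁ p₂ with hθdef
  have hnum : |b₂ * p₂ + d₂ * p₂ * (c + d₁ * θ)| ≤ M₂ * Cp + Md₂ * Cp * (Mc + Md₁ * Mθ) := by
    have h1 : |b₂ * p₂| ≤ M₂ * Cp := by
      rw [abs_mul, abs_of_nonneg hp₂]; exact mul_le_mul hb₂ hCp hp₂ hM₂0
    have hin : |c + d₁ * θ| ≤ Mc + Md₁ * Mθ := by
      calc |c + d₁ * θ| ≤ |c| + |d₁| * |θ| := by rw [← abs_mul]; exact abs_add_le _ _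
        _ ≤ _ := add_le_add hc (mul_le_mul hd₁ hθM (abs_nonneg _) hMd₁0)
    have h2 : |d₂ * p₂ * (c + d₁ * θ)| ≤ Md₂ * Cp * (Mc + Md₁ * Mθ) := by
      rw [abs_mul, abs_mul, abs_of_nonneg hp₂]
      exact mul_le_mul (mul_le_mul hd₂ hCp hp₂ hMd₂0) hin (abs_nonneg _) (by positivity)
    calc |b₂ * p₂ + d₂ * p₂ * (c + d₁ * θ)| ≤ |b₂ * p₂| + |d₂ * p₂ * (c + d₁ * θ)| :=
          abs_add_le _ _
      _ ≤ _ := add_le_add h1 h2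
  rw [Th2, ← hθdef, abs_div, abs_neg, abs_of_pos hα]
  exact div_le_div₀ (le_trans (abs_nonneg _) hnum) hnum hδ hden

lemma Af_abs_le {MΘ Mθ : ℝ} (ha : |a| ≤ Ma) (hb₁ : |b₁| ≤ M₁) (hb₂ : |b₂| ≤ M₂)
    (hθM : |Th1 b₁ b₂ c d₁ d₂ r₁ r₂ p₁ p₂| ≤ Mθ)
    (hΘM : |Th2 b₁ b₂ c d₁ d₂ r₁ r₂ p₁ p₂| ≤ MΘ) :
    |Af a b₁ b₂ c d₁ d₂ r₁ r₂ p₁ p₂| ≤ Ma + M₁ * Mθ + M₂ * MΘ := by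
  rw [Af]
  calc |a + b₁ * Th1 b₁ b₂ c d₁ d₂ r₁ r₂ p₁ p₂ + b₂ * Th2 b₁ b₂ c d₁ d₂ r₁ r₂ p₁ p₂|
      ≤ |a + b₁ * Th1 b₁ b₂ c d₁ d₂ r₁ r₂ p₁ p₂| + |b₂| * |Th2 b₁ b₂ c d₁ d₂ r₁ r₂ p₁ p₂| := by
        rw [← abs_mul]; exact abs_add_le _ _
    _ ≤ (|a| + |b₁| * |Th1 b₁ b₂ c d₁ d₂ r₁ r₂ p₁ p₂|) + |b₂| * |Th2 b₁ b₂ c d₁ d₂ r₁ r₂ p₁ p₂| := by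
        have : |a + b₁ * Th1 b₁ b₂ c d₁ d₂ r₁ r₂ p₁ p₂| ≤ |a| + |b₁| * |Th1 b₁ b₂ c d₁ d₂ r₁ r₂ p₁ p₂| := by
          rw [← abs_mul]; exact abs_add_le _ _
        linarith
    _ ≤ Ma + M₁ * Mθ + M₂ * MΘ := by
        have h1 := mul_le_mul hb₁ hθM (abs_nonneg _) (le_trans (abs_nonneg _) hb₁)
        have h2 := mul_le_mul hb₂ hΘM (abs_nonneg _) (le_trans (abs_nonneg _) hb₂)
        linarith

lemma Cf_abs_le {MΘ Mθ : ℝ} (hc : |c| ≤ Mc) (hd₁ : |d₁| ≤ Md₁) (hd₂ : |d₂| ≤ Md₂)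
    (hθM : |Th1 b₁ b₂ c d₁ d₂ r₁ r₂ p₁ p₂| ≤ Mθ)
    (hΘM : |Th2 b₁ b₂ c d₁ d₂ r₁ r₂ p₁ p₂| ≤ MΘ) :
    |Cf a b₁ b₂ c d₁ d₂ r₁ r₂ p₁ p₂| ≤ Mc + Md₁ * Mθ + Md₂ * MΘ := by
  rw [Cf]
  calc |c + d₁ * Th1 b₁ b₂ c d₁ d₂ r₁ r₂ p₁ p₂ + d₂ * Th2 b₁ b₂ c d₁ d₂ r₁ r₂ p₁ p₂|
      ≤ |c + d₁ * Th1 b₁ b₂ c d₁ d₂ r₁ r₂ p₁ p₂| + |d₂| * |Th2 b₁ b₂ c d₁ d₂ r₁ r₂ p₁ p₂| := by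
        rw [← abs_mul]; exact abs_add_le _ _
    _ ≤ (|c| + |d₁| * |Th1 b₁ b₂ c d₁ d₂ r₁ r₂ p₁ p₂|) + |d₂| * |Th2 b₁ b₂ c d₁ d₂ r₁ r₂ p₁ p₂| := by
        have : |c + d₁ * Th1 b₁ b₂ c d₁ d₂ r₁ r₂ p₁ p₂| ≤ |c| + |d₁| * |Th1 b₁ b₂ c d₁ d₂ r₁ r₂ p₁ p₂| := by
          rw [← abs_mul]; exact abs_add_le _ _
        linarith
    _ ≤ Mc + Md₁ * Mθ + Md₂ * MΘ := by
        have h1 := mul_le_mul hd₁ hθM (abs_nonneg _) (le_trans (abs_nonneg _) hd₁)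
        have h2 := mul_le_mul hd₂ hΘM (abs_nonneg _) (le_trans (abs_nonneg _) hd₂)
        linarith

lemma rhs1_abs_le {Cp MA MC MR Mθ : ℝ} (hp₁ : 0 ≤ p₁) (hCp : p₁ ≤ Cp)
    (hAf : |Af a b₁ b₂ c d₁ d₂ r₁ r₂ p₁ p₂| ≤ MA)
    (hCf : |Cf a b₁ b₂ c d₁ d₂ r₁ r₂ p₁ p₂| ≤ MC)
    (hq : |q₁| ≤ MQ₁) (hr : |r₁| ≤ MR)
    (hθM : |Th1 b₁ b₂ c d₁ d₂ r₁ r₂ p₁ p₂| ≤ Mθ) :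
    |rhs1 a b₁ b₂ c d₁ d₂ q₁ r₁ r₂ p₁ p₂| ≤ 2 * MA * Cp + MC ^ 2 * Cp + MQ₁ + MR * Mθ ^ 2 := by
  have hMA0 : 0 ≤ MA := le_trans (abs_nonneg _) hAf
  have hMC0 : 0 ≤ MC := le_trans (abs_nonneg _) hCf
  have hMR0 : 0 ≤ MR := le_trans (abs_nonneg _) hr
  have hCp0 : 0 ≤ Cp := le_trans hp₁ hCp
  rw [rhs1]
  have t1 : |2 * Af a b₁ b₂ c d₁ d₂ r₁ r₂ p₁ p₂ * p₁| ≤ 2 * MA * Cp := by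
    rw [abs_mul, abs_mul, abs_of_nonneg hp₁, abs_two]
    have := mul_le_mul hAf hCp hp₁ hMA0
    nlinarith [abs_nonneg (Af a b₁ b₂ c d₁ d₂ r₁ r₂ p₁ p₂)]
  have t2 : |(Cf a b₁ b₂ c d₁ d₂ r₁ r₂ p₁ p₂) ^ 2 * p₁| ≤ MC ^ 2 * Cp := by
    rw [abs_mul, abs_of_nonneg hp₁, abs_pow]
    exact mul_le_mul (pow_le_pow_left₀ (abs_nonneg _) hCf 2) hCp hp₁ (by positivity)
  have t4 : |r₁ * (Th1 b₁ b₂ c d₁ d₂ r₁ r₂ p₁ p₂) ^ 2| ≤ MR * Mθ ^ 2 := by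
    rw [abs_mul, abs_pow]
    exact mul_le_mul hr (pow_le_pow_left₀ (abs_nonneg _) hθM 2) (by positivity) hMR0
  calc |2 * Af a b₁ b₂ c d₁ d₂ r₁ r₂ p₁ p₂ * p₁ + (Cf a b₁ b₂ c d₁ d₂ r₁ r₂ p₁ p₂) ^ 2 * p₁
        + q₁ + r₁ * (Th1 b₁ b₂ c d₁ d₂ r₁ r₂ p₁ p₂) ^ 2|
      ≤ |2 * Af a b₁ b₂ c d₁ d₂ r₁ r₂ p₁ p₂ * p₁ + (Cf a b₁ b₂ c d₁ d₂ r₁ r₂ p₁ p₂) ^ 2 * p₁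
        + q₁| + |r₁ * (Th1 b₁ b₂ c d₁ d₂ r₁ r₂ p₁ p₂) ^ 2| := abs_add_le _ _
    _ ≤ (|2 * Af a b₁ b₂ c d₁ d₂ r₁ r₂ p₁ p₂ * p₁ + (Cf a b₁ b₂ c d₁ d₂ r₁ r₂ p₁ p₂) ^ 2 * p₁|
        + |q₁|) + |r₁ * (Th1 b₁ b₂ c d₁ d₂ r₁ r₂ p₁ p₂) ^ 2| := by
        linarith [abs_add_le (2 * Af a b₁ b₂ c d₁ d₂ r₁ r₂ p₁ p₂ * p₁
          + (Cf a b₁ b₂ c d₁ d₂ r₁ r₂ p₁ p₂) ^ 2 * p₁) q₁]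
    _ ≤ ((|2 * Af a b₁ b₂ c d₁ d₂ r₁ r₂ p₁ p₂ * p₁| + |(Cf a b₁ b₂ c d₁ d₂ r₁ r₂ p₁ p₂) ^ 2 * p₁|)
        + |q₁|) + |r₁ * (Th1 b₁ b₂ c d₁ d₂ r₁ r₂ p₁ p₂) ^ 2| := by
        linarith [abs_add_le (2 * Af a b₁ b₂ c d₁ d₂ r₁ r₂ p₁ p₂ * p₁)
          ((Cf a b₁ b₂ c d₁ d₂ r₁ r₂ p₁ p₂) ^ 2 * p₁)]
    _ ≤ 2 * MA * Cp + MC ^ 2 * Cp + MQ₁ + MR * Mθ ^ 2 := by linarith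

lemma rhs2_abs_le {Cp MA MC MR MΘ : ℝ} (hp₂ : 0 ≤ p₂) (hCp : p₂ ≤ Cp)
    (hAf : |Af a b₁ b₂ c d₁ d₂ r₁ r₂ p₁ p₂| ≤ MA)
    (hCf : |Cf a b₁ b₂ c d₁ d₂ r₁ r₂ p₁ p₂| ≤ MC)
    (hq : |q₂| ≤ MQ₂) (hr : |r₂| ≤ MR)
    (hΘM : |Th2 b₁ b₂ c d₁ d₂ r₁ r₂ p₁ p₂| ≤ MΘ) :
    |rhs2 a b₁ b₂ c d₁ d₂ q₂ r₁ r₂ p₁ p₂| ≤ 2 * MA * Cp + MC ^ 2 * Cp + MQ₂ + MR * MΘ ^ 2 := by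
  have hMA0 : 0 ≤ MA := le_trans (abs_nonneg _) hAf
  have hMC0 : 0 ≤ MC := le_trans (abs_nonneg _) hCf
  have hMR0 : 0 ≤ MR := le_trans (abs_nonneg _) hr
  have hCp0 : 0 ≤ Cp := le_trans hp₂ hCp
  rw [rhs2]
  have t1 : |2 * Af a b₁ b₂ c d₁ d₂ r₁ r₂ p₁ p₂ * p₂| ≤ 2 * MA * Cp := by
    rw [abs_mul, abs_mul, abs_of_nonneg hp₂, abs_two]
    have := mul_le_mul hAf hCp hp₂ hMA0
    nlinarith [abs_nonneg (Af a b₁ b₂ c d₁ d₂ r₁ r₂ p₁ p₂)]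
  have t2 : |(Cf a b₁ b₂ c d₁ d₂ r₁ r₂ p₁ p₂) ^ 2 * p₂| ≤ MC ^ 2 * Cp := by
    rw [abs_mul, abs_of_nonneg hp₂, abs_pow]
    exact mul_le_mul (pow_le_pow_left₀ (abs_nonneg _) hCf 2) hCp hp₂ (by positivity)
  have t4 : |r₂ * (Th2 b₁ b₂ c d₁ d₂ r₁ r₂ p₁ p₂) ^ 2| ≤ MR * MΘ ^ 2 := by
    rw [abs_mul, abs_pow]
    exact mul_le_mul hr (pow_le_pow_left₀ (abs_nonneg _) hΘM 2) (by positivity) hMR0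
  calc |2 * Af a b₁ b₂ c d₁ d₂ r₁ r₂ p₁ p₂ * p₂ + (Cf a b₁ b₂ c d₁ d₂ r₁ r₂ p₁ p₂) ^ 2 * p₂
        + q₂ + r₂ * (Th2 b₁ b₂ c d₁ d₂ r₁ r₂ p₁ p₂) ^ 2|
      ≤ |2 * Af a b₁ b₂ c d₁ d₂ r₁ r₂ p₁ p₂ * p₂ + (Cf a b₁ b₂ c d₁ d₂ r₁ r₂ p₁ p₂) ^ 2 * p₂
        + q₂| + |r₂ * (Th2 b₁ b₂ c d₁ d₂ r₁ r₂ p₁ p₂) ^ 2| := abs_add_le _ _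
    _ ≤ ((|2 * Af a b₁ b₂ c d₁ d₂ r₁ r₂ p₁ p₂ * p₂| + |(Cf a b₁ b₂ c d₁ d₂ r₁ r₂ p₁ p₂) ^ 2 * p₂|)
        + |q₂|) + |r₂ * (Th2 b₁ b₂ c d₁ d₂ r₁ r₂ p₁ p₂) ^ 2| := by
        have g1 := abs_add_le (2 * Af a b₁ b₂ c d₁ d₂ r₁ r₂ p₁ p₂ * p₂
          + (Cf a b₁ b₂ c d₁ d₂ r₁ r₂ p₁ p₂) ^ 2 * p₂) q₂
        have g2 := abs_add_le (2 * Af a b₁ b₂ c d₁ d₂ r₁ r₂ p₁ p₂ * p₂)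
          ((Cf a b₁ b₂ c d₁ d₂ r₁ r₂ p₁ p₂) ^ 2 * p₂)
        linarith
    _ ≤ 2 * MA * Cp + MC ^ 2 * Cp + MQ₂ + MR * MΘ ^ 2 := by linarith

end pointwise

/-- Backward Grönwall inequality in integral form. -/
lemma gronwall_backward {τ T c L : ℝ} {P : ℝ → ℝ} (hτT : τ ≤ T) (hc : 0 ≤ c) (hL : 0 < L)
    (hP : ContinuousOn P (Set.Icc τ T))
    (hineq : ∀ s ∈ Set.Icc τ T, P s ≤ c + L * ∫ r in s..T, P r) :
    ∀ s ∈ Set.Icc τ T, P s ≤ c * Real.exp (L * (T - τ)) := by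
  have hint : IntegrableOn P (Set.Icc τ T) := hP.integrableOn_compact isCompact_Icc
  have hint' : IntegrableOn P (Set.uIcc τ T) := by rwa [Set.uIcc_of_le hτT]
  have hgcont : ContinuousOn (fun s => ∫ r in s..T, P r) (Set.Icc τ T) := by
    have := intervalIntegral.continuousOn_primitive_interval_left (a := τ) (b := T)
      (f := P) (μ := volume) hint'
    rwa [Set.uIcc_of_le hτT] at this
  have hgderiv : ∀ x ∈ Set.Ioo τ T, HasDerivAt (fun s => ∫ r in s..T, P r) (-(P x)) x := by
    intro x hx
    have hmem : Set.Icc τ T ∈ nhds x := Icc_mem_nhds hx.1 hx.2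
    have hcx : ContinuousAt P x := hP.continuousAt hmem
    refine intervalIntegral.integral_hasDerivAt_left ?_ ?_ hcx
    · have hsub : Set.uIcc x T ⊆ Set.Icc τ T := by
        rw [Set.uIcc_of_le hx.2.le]; exact Set.Icc_subset_Icc hx.1.le le_rfl
      exact (hint.mono_set hsub).intervalIntegrable
    · exact ⟨Set.Icc τ T, hmem, hP.aestronglyMeasurable measurableSet_Icc⟩
  have hWmono : MonotoneOn
      (fun s => Real.exp (L * s) * (c / L + ∫ r in s..T, P r)) (Set.Icc τ T) := by
    have hWd : ∀ x ∈ interior (Set.Icc τ T),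
        HasDerivAt (fun s => Real.exp (L * s) * (c / L + ∫ r in s..T, P r))
          (Real.exp (L * x) * (L * (c / L + ∫ r in x..T, P r) - P x)) x := by
      intro x hx
      rw [interior_Icc] at hx
      have h1 : HasDerivAt (fun s => Real.exp (L * s)) (L * Real.exp (L * x)) x := by
        simpa [mul_comm, Function.comp_def] using (Real.hasDerivAt_exp (L * x)).comp x
          ((hasDerivAt_id x).const_mul L)
      have h2 : HasDerivAt (fun s => c / L + ∫ r in s..T, P r) (-(P x)) x :=
        (hgderiv x hx).const_add (c / L)
      have := h1.mul h2
      refine this.congr_deriv ?_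
      ring
    apply monotoneOn_of_deriv_nonneg (convex_Icc τ T)
    · exact ((Real.continuous_exp.comp (continuous_const.mul continuous_id)).continuousOn).mul
        (continuousOn_const.add hgcont)
    · intro x hx
      exact (hWd x hx).differentiableAt.differentiableWithinAt
    · intro x hx
      rw [(hWd x hx).deriv]
      have hx' : x ∈ Set.Icc τ T := by
        rw [interior_Icc] at hx; exact ⟨hx.1.le, hx.2.le⟩
      have hPx := hineq x hx'
      have h3 : L * (c / L + ∫ r in x..T, P r) = c + L * ∫ r in x..T, P r := by
        field_simp
      have h4 : 0 ≤ L * (c / L + ∫ r in x..T, P r) - P x := by linarith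
      positivity
  intro s hs
  have hWle := hWmono hs (Set.right_mem_Icc.mpr hτT) hs.2
  simp only at hWle
  rw [intervalIntegral.integral_same] at hWle
  have hexps : 0 < Real.exp (L * s) := Real.exp_pos _
  have hgs : c / L + (∫ r in s..T, P r) ≤ Real.exp (L * (T - s)) * (c / L) := by
    calc c / L + (∫ r in s..T, P r)
        = Real.exp (L * s) * (c / L + ∫ r in s..T, P r) / Real.exp (L * s) := by
          field_simp
      _ ≤ Real.exp (L * T) * (c / L + 0) / Real.exp (L * s) := by gcongr
      _ = Real.exp (L * (T - s)) * (c / L) := by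
          rw [show L * (T - s) = L * T - L * s by ring, Real.exp_sub]
          ring
  have hfin : P s ≤ c + L * ((Real.exp (L * (T - s))) * (c / L) - c / L) := by
    have h5 := hineq s hs
    have h2 : L * (∫ r in s..T, P r) ≤ L * ((Real.exp (L * (T - s))) * (c / L) - c / L) := by
      apply mul_le_mul_of_nonneg_left _ hL.le
      linarith
    linarith
  have hcl : c + L * ((Real.exp (L * (T - s))) * (c / L) - c / L)
      = c * Real.exp (L * (T - s)) := by
    field_simp
    ring
  rw [hcl] at hfin
  calc P s ≤ c * Real.exp (L * (T - s)) := hfin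
    _ ≤ c * Real.exp (L * (T - τ)) := by
      apply mul_le_mul_of_nonneg_left _ hc
      apply Real.exp_le_exp.mpr
      nlinarith [hs.1]


section meas
variable {μ : Measure ℝ} {A B₁ B₂ C D₁ D₂ Q₁ Q₂ R₁ R₂ P₁ P₂ : ℝ → ℝ}

lemma th1_aemeas (hB₁ : AEMeasurable B₁ μ) (hB₂ : AEMeasurable B₂ μ) (hC : AEMeasurable C μ)
    (hD₁ : AEMeasurable D₁ μ) (hD₂ : AEMeasurable D₂ μ) (hR₁ : AEMeasurable R₁ μ)
    (hR₂ : AEMeasurable R₂ μ) (hP₁ : AEMeasurable P₁ μ) (hP₂ : AEMeasurable P₂ μ) :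
    AEMeasurable (fun r =>
      Th1 (B₁ r) (B₂ r) (C r) (D₁ r) (D₂ r) (R₁ r) (R₂ r) (P₁ r) (P₂ r)) μ := by
  have hden : AEMeasurable (fun r => R₂ r + (D₂ r) ^ 2 * P₂ r) μ :=
    hR₂.add ((hD₂.pow_const 2).mul hP₂)
  have hK : AEMeasurable (fun r => Kf (B₂ r) (C r) (D₂ r) (R₂ r) (P₂ r)) μ := by
    unfold Kf
    exact ((hB₂.mul hP₂).add ((hD₂.mul hP₂).mul hC)).div hden
  have hB : AEMeasurable (fun r => Bb (B₁ r) (B₂ r) (D₁ r) (D₂ r) (R₂ r) (P₂ r)) μ := by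
    unfold Bb
    exact hB₁.sub ((((hB₂.mul hD₂).mul hP₂).mul hD₁).div hden)
  have hD : AEMeasurable (fun r => Dd (D₁ r) (D₂ r) (R₂ r) (P₂ r)) μ := by
    unfold Dd
    exact hD₁.sub ((((hD₂.pow_const 2).mul hP₂).mul hD₁).div hden)
  unfold Th1
  exact (((hB.mul hP₁).add ((hD.mul hP₁).mul (hC.sub (hD₂.mul hK)))).neg).div
    (hR₁.add ((hD.pow_const 2).mul hP₁))

lemma th2_aemeas (hB₁ : AEMeasurable B₁ μ) (hB₂ : AEMeasurable B₂ μ) (hC : AEMeasurable C μ)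
    (hD₁ : AEMeasurable D₁ μ) (hD₂ : AEMeasurable D₂ μ) (hR₁ : AEMeasurable R₁ μ)
    (hR₂ : AEMeasurable R₂ μ) (hP₁ : AEMeasurable P₁ μ) (hP₂ : AEMeasurable P₂ μ) :
    AEMeasurable (fun r =>
      Th2 (B₁ r) (B₂ r) (C r) (D₁ r) (D₂ r) (R₁ r) (R₂ r) (P₁ r) (P₂ r)) μ := by
  have hθ := th1_aemeas hB₁ hB₂ hC hD₁ hD₂ hR₁ hR₂ hP₁ hP₂
  unfold Th2
  exact ((hB₂.mul hP₂).add ((hD₂.mul hP₂).mul (hC.add (hD₁.mul hθ)))).neg.div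
    (hR₂.add ((hD₂.pow_const 2).mul hP₂))

lemma rhs1_aemeas (hA : AEMeasurable A μ) (hB₁ : AEMeasurable B₁ μ) (hB₂ : AEMeasurable B₂ μ)
    (hC : AEMeasurable C μ) (hD₁ : AEMeasurable D₁ μ) (hD₂ : AEMeasurable D₂ μ)
    (hQ₁ : AEMeasurable Q₁ μ) (hR₁ : AEMeasurable R₁ μ) (hR₂ : AEMeasurable R₂ μ)
    (hP₁ : AEMeasurable P₁ μ) (hP₂ : AEMeasurable P₂ μ) :
    AEMeasurable (fun r => rhs1 (A r) (B₁ r) (B₂ r) (C r) (D₁ r) (D₂ r) (Q₁ r) (R₁ r) (R₂ r)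
      (P₁ r) (P₂ r)) μ := by
  have hθ := th1_aemeas hB₁ hB₂ hC hD₁ hD₂ hR₁ hR₂ hP₁ hP₂
  have hΘ := th2_aemeas hB₁ hB₂ hC hD₁ hD₂ hR₁ hR₂ hP₁ hP₂
  have hAf : AEMeasurable (fun r => Af (A r) (B₁ r) (B₂ r) (C r) (D₁ r) (D₂ r) (R₁ r) (R₂ r)
      (P₁ r) (P₂ r)) μ := by
    unfold Af; exact (hA.add (hB₁.mul hθ)).add (hB₂.mul hΘ)
  have hCf : AEMeasurable (fun r => Cf (A r) (B₁ r) (B₂ r) (C r) (D₁ r) (D₂ r) (R₁ r) (R₂ r)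
      (P₁ r) (P₂ r)) μ := by
    unfold Cf; exact (hC.add (hD₁.mul hθ)).add (hD₂.mul hΘ)
  unfold rhs1
  exact ((((aemeasurable_const.mul hAf).mul hP₁).add ((hCf.pow_const 2).mul hP₁)).add hQ₁).add
    (hR₁.mul (hθ.pow_const 2))

lemma rhs2_aemeas (hA : AEMeasurable A μ) (hB₁ : AEMeasurable B₁ μ) (hB₂ : AEMeasurable B₂ μ)
    (hC : AEMeasurable C μ) (hD₁ : AEMeasurable D₁ μ) (hD₂ : AEMeasurable D₂ μ)
    (hQ₂ : AEMeasurable Q₂ μ) (hR₁ : AEMeasurable R₁ μ) (hR₂ : AEMeasurable R₂ μ)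
    (hP₁ : AEMeasurable P₁ μ) (hP₂ : AEMeasurable P₂ μ) :
    AEMeasurable (fun r => rhs2 (A r) (B₁ r) (B₂ r) (C r) (D₁ r) (D₂ r) (Q₂ r) (R₁ r) (R₂ r)
      (P₁ r) (P₂ r)) μ := by
  have hθ := th1_aemeas hB₁ hB₂ hC hD₁ hD₂ hR₁ hR₂ hP₁ hP₂
  have hΘ := th2_aemeas hB₁ hB₂ hC hD₁ hD₂ hR₁ hR₂ hP₁ hP₂
  have hAf : AEMeasurable (fun r => Af (A r) (B₁ r) (B₂ r) (C r) (D₁ r) (D₂ r) (R₁ r) (R₂ r)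
      (P₁ r) (P₂ r)) μ := by
    unfold Af; exact (hA.add (hB₁.mul hθ)).add (hB₂.mul hΘ)
  have hCf : AEMeasurable (fun r => Cf (A r) (B₁ r) (B₂ r) (C r) (D₁ r) (D₂ r) (R₁ r) (R₂ r)
      (P₁ r) (P₂ r)) μ := by
    unfold Cf; exact (hC.add (hD₁.mul hθ)).add (hD₂.mul hΘ)
  unfold rhs2
  exact ((((aemeasurable_const.mul hAf).mul hP₂).add ((hCf.pow_const 2).mul hP₂)).add hQ₂).add
    (hR₂.mul (hΘ.pow_const 2))

end meas

/-- A priori estimate for the one-dimensional ERE with non-degenerate follower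
diffusion coefficient `|D₂| ≥ δ`: there is a constant `C`, depending only on the
data, bounding `P₁ + P₂` uniformly over all solutions on all subintervals `[τ,T]`. -/
theorem stmt_1 (T δ : ℝ) (hT : 0 < T) (hδ : 0 < δ)
    (A B₁ B₂ C D₁ D₂ Q₁ Q₂ R₁ R₂ : ℝ → ℝ) (G₁ G₂ : ℝ)
    (hbm : BddMeas A T ∧ BddMeas B₁ T ∧ BddMeas B₂ T ∧ BddMeas C T ∧ BddMeas D₁ T ∧
      BddMeas D₂ T ∧ BddMeas Q₁ T ∧ BddMeas Q₂ T ∧ BddMeas R₁ T ∧ BddMeas R₂ T)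
    (hpos : ∀ᵐ s ∂(MeasureTheory.volume.restrict (Set.Icc (0 : ℝ) T)),
      0 ≤ Q₁ s ∧ 0 ≤ Q₂ s ∧ δ ≤ R₁ s ∧ δ ≤ R₂ s ∧ δ ≤ |D₂ s|)
    (hG₁ : 0 ≤ G₁) (hG₂ : 0 ≤ G₂) :
    ∃ Cb : ℝ, ∀ τ ∈ Set.Ico (0 : ℝ) T, ∀ P₁ P₂ : ℝ → ℝ,
      IsSolution A B₁ B₂ C D₁ D₂ Q₁ Q₂ R₁ R₂ G₁ G₂ τ T P₁ P₂ →
        ∀ s ∈ Set.Icc τ T, P₁ s + P₂ s ≤ Cb := by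
  obtain ⟨⟨mA, MA, bdA⟩, ⟨mB₁, MB₁, bdB₁⟩, ⟨mB₂, MB₂, bdB₂⟩, ⟨mC, MC, bdC⟩,
    ⟨mD₁, MD₁, bdD₁⟩, ⟨mD₂, MD₂, bdD₂⟩, ⟨mQ₁, MQ₁, bdQ₁⟩, ⟨mQ₂, MQ₂, bdQ₂⟩,
    ⟨mR₁, MR₁, bdR₁⟩, ⟨mR₂, MR₂, bdR₂⟩⟩ := hbm
  have h0T : (0:ℝ) ∈ Set.Icc (0:ℝ) T := ⟨le_rfl, hT.le⟩
  have hMA0 : 0 ≤ MA := le_trans (abs_nonneg _) (bdA 0 h0T)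
  have hMB₁0 : 0 ≤ MB₁ := le_trans (abs_nonneg _) (bdB₁ 0 h0T)
  have hMB₂0 : 0 ≤ MB₂ := le_trans (abs_nonneg _) (bdB₂ 0 h0T)
  have hMC0 : 0 ≤ MC := le_trans (abs_nonneg _) (bdC 0 h0T)
  have hMD₁0 : 0 ≤ MD₁ := le_trans (abs_nonneg _) (bdD₁ 0 h0T)
  have hMD₂0 : 0 ≤ MD₂ := le_trans (abs_nonneg _) (bdD₂ 0 h0T)
  have hMQ₁0 : 0 ≤ MQ₁ := le_trans (abs_nonneg _) (bdQ₁ 0 h0T)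
  have hMQ₂0 : 0 ≤ MQ₂ := le_trans (abs_nonneg _) (bdQ₂ 0 h0T)
  have hMR₁0 : 0 ≤ MR₁ := le_trans (abs_nonneg _) (bdR₁ 0 h0T)
  have hMR₂0 : 0 ≤ MR₂ := le_trans (abs_nonneg _) (bdR₂ 0 h0T)
  obtain ⟨KB, hKB⟩ : ∃ x : ℝ, x = (MB₂ + MD₂ * MC) / δ ^ 2 := ⟨_, rfl⟩
  have hKB0 : 0 ≤ KB := by rw [hKB]; positivity
  obtain ⟨L₁, hL₁⟩ : ∃ x : ℝ, x = 2 * (MA + MB₂ * KB) + (MC + MD₂ * KB) ^ 2 + 1 := ⟨_, rfl⟩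
  have hL₁pos : 0 < L₁ := by
    rw [hL₁]; nlinarith [sq_nonneg (MC + MD₂ * KB), mul_nonneg hMB₂0 hKB0]
  obtain ⟨c₁, hc₁⟩ : ∃ x : ℝ, x = G₁ + MQ₁ * T := ⟨_, rfl⟩
  have hc₁0 : 0 ≤ c₁ := by rw [hc₁]; have := mul_nonneg hMQ₁0 hT.le; linarith
  obtain ⟨N₁, hN₁⟩ : ∃ x : ℝ, x = c₁ * Real.exp (L₁ * T) := ⟨_, rfl⟩
  have hN₁0 : 0 ≤ N₁ := by rw [hN₁]; positivity
  obtain ⟨coefθ, hcoefθ⟩ : ∃ x : ℝ, x = MB₁ + MB₂ * MD₁ / δ + 2 * MD₁ * (MC + MD₂ * KB) :=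
    ⟨_, rfl⟩
  have hcoefθ0 : 0 ≤ coefθ := by
    rw [hcoefθ]
    have h1 : 0 ≤ MB₂ * MD₁ / δ := by positivity
    have h2 : 0 ≤ MD₂ * KB := mul_nonneg hMD₂0 hKB0
    nlinarith
  obtain ⟨Mθ, hMθ⟩ : ∃ x : ℝ, x = coefθ * N₁ / δ := ⟨_, rfl⟩
  have hMθ0 : 0 ≤ Mθ := by rw [hMθ]; positivity
  obtain ⟨L₂, hL₂⟩ : ∃ x : ℝ, x = 2 * (MA + MB₁ * Mθ) + 2 * MB₂ * (MD₁ / δ) * Mθ + MC ^ 2 + 1 :=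
    ⟨_, rfl⟩
  have hL₂pos : 0 < L₂ := by
    rw [hL₂]
    have h1 : 0 ≤ MB₁ * Mθ := mul_nonneg hMB₁0 hMθ0
    have h2 : 0 ≤ 2 * MB₂ * (MD₁ / δ) * Mθ := by positivity
    nlinarith [sq_nonneg MC]
  obtain ⟨M₂c, hM₂c⟩ : ∃ x : ℝ, x = MQ₂ + MR₂ * (MD₁ / δ) ^ 2 * Mθ ^ 2 := ⟨_, rfl⟩
  have hM₂c0 : 0 ≤ M₂c := by rw [hM₂c]; positivity
  obtain ⟨c₂, hc₂⟩ : ∃ x : ℝ, x = G₂ + M₂c * T := ⟨_, rfl⟩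
  have hc₂0 : 0 ≤ c₂ := by rw [hc₂]; have := mul_nonneg hM₂c0 hT.le; linarith
  obtain ⟨N₂, hN₂⟩ : ∃ x : ℝ, x = c₂ * Real.exp (L₂ * T) := ⟨_, rfl⟩
  have hN₂0 : 0 ≤ N₂ := by rw [hN₂]; positivity
  refine ⟨N₁ + N₂, ?_⟩
  rintro τ ⟨hτ0, hτltT⟩ P₁ P₂ ⟨hP₁c, hP₂c, hnn, heq₂, heq₁⟩
  have hτT : τ ≤ T := hτltT.le
  have hsubτ0 : Set.Icc τ T ⊆ Set.Icc (0:ℝ) T := Set.Icc_subset_Icc hτ0 le_rfl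
  -- crude sup bound for P₁, P₂
  obtain ⟨C1, hC1⟩ := isCompact_Icc.exists_bound_of_continuousOn hP₁c
  obtain ⟨C2, hC2⟩ := isCompact_Icc.exists_bound_of_continuousOn hP₂c
  obtain ⟨Cp, hCp⟩ : ∃ x : ℝ, x = max (max C1 C2) 0 := ⟨_, rfl⟩
  have hCp0 : 0 ≤ Cp := by rw [hCp]; exact le_max_right _ _
  have hP₁Cp : ∀ x ∈ Set.Icc τ T, P₁ x ≤ Cp := by
    intro x hx
    have := hC1 x hx
    rw [Real.norm_eq_abs] at this
    rw [hCp]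
    exact le_trans (le_abs_self _) (le_trans this (le_max_of_le_left (le_max_left _ _)))
  have hP₂Cp : ∀ x ∈ Set.Icc τ T, P₂ x ≤ Cp := by
    intro x hx
    have := hC2 x hx
    rw [Real.norm_eq_abs] at this
    rw [hCp]
    exact le_trans (le_abs_self _) (le_trans this (le_max_of_le_left (le_max_right _ _)))
  -- crude abs-bound constants
  obtain ⟨Mθ', hMθ'⟩ : ∃ x : ℝ, x = coefθ * Cp / δ := ⟨_, rfl⟩
  have hMθ'0 : 0 ≤ Mθ' := by rw [hMθ']; positivity
  obtain ⟨MΘ', hMΘ'⟩ : ∃ x : ℝ, x = (MB₂ * Cp + MD₂ * Cp * (MC + MD₁ * Mθ')) / δ := ⟨_, rfl⟩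
  obtain ⟨MA', hMA'⟩ : ∃ x : ℝ, x = MA + MB₁ * Mθ' + MB₂ * MΘ' := ⟨_, rfl⟩
  obtain ⟨MC', hMC'⟩ : ∃ x : ℝ, x = MC + MD₁ * Mθ' + MD₂ * MΘ' := ⟨_, rfl⟩
  -- measurability of P₁ P₂
  have hP₁m : AEMeasurable P₁ (volume.restrict (Set.Icc τ T)) :=
    hP₁c.aemeasurable measurableSet_Icc
  have hP₂m : AEMeasurable P₂ (volume.restrict (Set.Icc τ T)) :=
    hP₂c.aemeasurable measurableSet_Icc
  -- the a.e. facts on each subinterval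
  have haefacts : ∀ s ∈ Set.Icc τ T, ∀ᵐ r ∂volume.restrict (Set.Icc s T),
      r ∈ Set.Icc τ T ∧ r ∈ Set.Icc (0:ℝ) T ∧ 0 ≤ Q₁ r ∧ 0 ≤ Q₂ r ∧ δ ≤ R₁ r ∧ δ ≤ R₂ r ∧
        δ ≤ |D₂ r| := by
    intro s hs
    have h1 : ∀ᵐ r ∂volume.restrict (Set.Icc s T), r ∈ Set.Icc s T :=
      ae_restrict_mem measurableSet_Icc
    have h2 := ae_restrict_of_ae_restrict_of_subset
      (Set.Icc_subset_Icc (le_trans hτ0 hs.1) le_rfl) hpos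
    filter_upwards [h1, h2] with r hr1 hr2
    have hrτ : r ∈ Set.Icc τ T := ⟨le_trans hs.1 hr1.1, hr1.2⟩
    exact ⟨hrτ, hsubτ0 hrτ, hr2.1, hr2.2.1, hr2.2.2.1, hr2.2.2.2.1, hr2.2.2.2.2⟩
  -- pointwise abs bounds (used for integrability), valid under the a.e. facts
  have hptabs : ∀ r, r ∈ Set.Icc τ T → r ∈ Set.Icc (0:ℝ) T → 0 ≤ Q₁ r → 0 ≤ Q₂ r →
      δ ≤ R₁ r → δ ≤ R₂ r → δ ≤ |D₂ r| →
      |rhs1 (A r) (B₁ r) (B₂ r) (C r) (D₁ r) (D₂ r) (Q₁ r) (R₁ r) (R₂ r) (P₁ r) (P₂ r)|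
        ≤ 2 * MA' * Cp + MC' ^ 2 * Cp + MQ₁ + MR₁ * Mθ' ^ 2 ∧
      |rhs2 (A r) (B₁ r) (B₂ r) (C r) (D₁ r) (D₂ r) (Q₂ r) (R₁ r) (R₂ r) (P₁ r) (P₂ r)|
        ≤ 2 * MA' * Cp + MC' ^ 2 * Cp + MQ₂ + MR₂ * MΘ' ^ 2 := by
    intro r hrτ hr0 hq₁ hq₂ hr₁ hr₂ hd₂
    have hp₁ : 0 ≤ P₁ r := (hnn r hrτ).1
    have hp₂ : 0 ≤ P₂ r := (hnn r hrτ).2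
    have hθraw := Th1_abs_le hδ (bdB₁ r hr0) (bdB₂ r hr0) (bdC r hr0) (bdD₁ r hr0)
      (bdD₂ r hr0) hr₁ hr₂ hd₂ hp₁ hp₂
    have hraw : MB₁ + MB₂ * MD₁ / δ + 2 * MD₁ * (MC + MD₂ * ((MB₂ + MD₂ * MC) / δ ^ 2))
        = coefθ := by rw [hcoefθ, hKB]
    rw [hraw] at hθraw
    have hθ' : |Th1 (B₁ r) (B₂ r) (C r) (D₁ r) (D₂ r) (R₁ r) (R₂ r) (P₁ r) (P₂ r)| ≤ Mθ' := by
      refine le_trans hθraw ?_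
      rw [hMθ']
      gcongr
      exact hP₁Cp r hrτ
    have hΘ' : |Th2 (B₁ r) (B₂ r) (C r) (D₁ r) (D₂ r) (R₁ r) (R₂ r) (P₁ r) (P₂ r)| ≤ MΘ' := by
      rw [hMΘ']
      exact Th2_abs_le hδ (bdB₂ r hr0) (bdC r hr0) (bdD₁ r hr0) (bdD₂ r hr0) hr₂ hp₂
        (hP₂Cp r hrτ) hθ'
    have hAfb : |Af (A r) (B₁ r) (B₂ r) (C r) (D₁ r) (D₂ r) (R₁ r) (R₂ r) (P₁ r) (P₂ r)|
        ≤ MA' := by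
      rw [hMA']; exact Af_abs_le (bdA r hr0) (bdB₁ r hr0) (bdB₂ r hr0) hθ' hΘ'
    have hCfb : |Cf (A r) (B₁ r) (B₂ r) (C r) (D₁ r) (D₂ r) (R₁ r) (R₂ r) (P₁ r) (P₂ r)|
        ≤ MC' := by
      rw [hMC']; exact Cf_abs_le (bdC r hr0) (bdD₁ r hr0) (bdD₂ r hr0) hθ' hΘ'
    exact ⟨rhs1_abs_le hp₁ (hP₁Cp r hrτ) hAfb hCfb (bdQ₁ r hr0) (bdR₁ r hr0) hθ',
      rhs2_abs_le hp₂ (hP₂Cp r hrτ) hAfb hCfb (bdQ₂ r hr0) (bdR₂ r hr0) hΘ'⟩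
  -- interval integrability of the right-hand sides
  have hint1 : ∀ s ∈ Set.Icc τ T, IntervalIntegrable (fun r =>
      rhs1 (A r) (B₁ r) (B₂ r) (C r) (D₁ r) (D₂ r) (Q₁ r) (R₁ r) (R₂ r) (P₁ r) (P₂ r))
      volume s T := by
    intro s hs
    rw [intervalIntegrable_iff_integrableOn_Icc_of_le hs.2]
    have hmsub : volume.restrict (Set.Icc s T) ≤ volume.restrict (Set.Icc τ T) :=
      Measure.restrict_mono (Set.Icc_subset_Icc hs.1 le_rfl) le_rfl
    have hm := rhs1_aemeas mA.aemeasurable mB₁.aemeasurable mB₂.aemeasurable mC.aemeasurable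
      mD₁.aemeasurable mD₂.aemeasurable mQ₁.aemeasurable mR₁.aemeasurable mR₂.aemeasurable
      (hP₁m.mono_measure hmsub) (hP₂m.mono_measure hmsub)
    refine Integrable.mono'
      (g := fun _ => 2 * MA' * Cp + MC' ^ 2 * Cp + MQ₁ + MR₁ * Mθ' ^ 2)
      (integrableOn_const measure_Icc_lt_top.ne)
      hm.aestronglyMeasurable ?_
    filter_upwards [haefacts s hs] with r hr
    rw [Real.norm_eq_abs]
    exact (hptabs r hr.1 hr.2.1 hr.2.2.1 hr.2.2.2.1 hr.2.2.2.2.1 hr.2.2.2.2.2.1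
      hr.2.2.2.2.2.2).1
  have hint2 : ∀ s ∈ Set.Icc τ T, IntervalIntegrable (fun r =>
      rhs2 (A r) (B₁ r) (B₂ r) (C r) (D₁ r) (D₂ r) (Q₂ r) (R₁ r) (R₂ r) (P₁ r) (P₂ r))
      volume s T := by
    intro s hs
    rw [intervalIntegrable_iff_integrableOn_Icc_of_le hs.2]
    have hmsub : volume.restrict (Set.Icc s T) ≤ volume.restrict (Set.Icc τ T) :=
      Measure.restrict_mono (Set.Icc_subset_Icc hs.1 le_rfl) le_rfl
    have hm := rhs2_aemeas mA.aemeasurable mB₁.aemeasurable mB₂.aemeasurable mC.aemeasurable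
      mD₁.aemeasurable mD₂.aemeasurable mQ₂.aemeasurable mR₁.aemeasurable mR₂.aemeasurable
      (hP₁m.mono_measure hmsub) (hP₂m.mono_measure hmsub)
    refine Integrable.mono'
      (g := fun _ => 2 * MA' * Cp + MC' ^ 2 * Cp + MQ₂ + MR₂ * MΘ' ^ 2)
      (integrableOn_const measure_Icc_lt_top.ne)
      hm.aestronglyMeasurable ?_
    filter_upwards [haefacts s hs] with r hr
    rw [Real.norm_eq_abs]
    exact (hptabs r hr.1 hr.2.1 hr.2.2.1 hr.2.2.2.1 hr.2.2.2.2.1 hr.2.2.2.2.2.1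
      hr.2.2.2.2.2.2).2
  -- Step 1 : Grönwall for P₁
  have key₁ : ∀ s ∈ Set.Icc τ T, P₁ s ≤ c₁ + L₁ * ∫ r in s..T, P₁ r := by
    intro s hs
    have hsT : s ≤ T := hs.2
    have hIP : IntervalIntegrable P₁ volume s T :=
      (hP₁c.mono (Set.Icc_subset_Icc hs.1 le_rfl)).intervalIntegrable_of_Icc hsT
    have hlin : IntervalIntegrable (fun r => L₁ * P₁ r + MQ₁) volume s T :=
      ((continuousOn_const.mul (hP₁c.mono (Set.Icc_subset_Icc hs.1 le_rfl))).add
        continuousOn_const).intervalIntegrable_of_Icc hsT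
    have hmono := intervalIntegral.integral_mono_ae_restrict hsT (hint1 s hs) hlin ?_
    · have heval : (∫ r in s..T, (L₁ * P₁ r + MQ₁))
          = L₁ * (∫ r in s..T, P₁ r) + (T - s) * MQ₁ := by
        rw [intervalIntegral.integral_add (hIP.const_mul L₁) intervalIntegrable_const,
          intervalIntegral.integral_const_mul, intervalIntegral.integral_const]
        simp [smul_eq_mul]
      have hs0 : 0 ≤ s := le_trans hτ0 hs.1
      have hTs : (T - s) * MQ₁ ≤ T * MQ₁ := by
        apply mul_le_mul_of_nonneg_right _ hMQ₁0
        linarith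
      rw [heq₁ s hs, hc₁]
      rw [heval] at hmono
      linarith only [hmono, hTs]
    · filter_upwards [haefacts s hs] with r hr
      obtain ⟨hrτ, hr0, hq₁, hq₂, hr₁, hr₂, hd₂⟩ := hr
      have hp₁ : 0 ≤ P₁ r := (hnn r hrτ).1
      have hp₂ : 0 ≤ P₂ r := (hnn r hrτ).2
      have h := rhs1_le (b₁ := B₁ r) (d₁ := D₁ r) (q₁ := Q₁ r) hδ (bdA r hr0) (bdB₂ r hr0) (bdC r hr0) (bdD₂ r hr0) hr₁ hr₂ hd₂
        hp₁ hp₂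
      rw [show (MB₂ + MD₂ * MC) / δ ^ 2 = KB from hKB.symm] at h
      have hQle : Q₁ r ≤ MQ₁ := le_trans (le_abs_self _) (bdQ₁ r hr0)
      have hLle : (2 * (MA + MB₂ * KB) + (MC + MD₂ * KB) ^ 2) * P₁ r ≤ L₁ * P₁ r := by
        apply mul_le_mul_of_nonneg_right _ hp₁
        rw [hL₁]; linarith only [hp₁]
      linarith only [h, hQle, hLle]
  have hgr₁ := gronwall_backward hτT hc₁0 hL₁pos hP₁c key₁
  have hbd₁ : ∀ s ∈ Set.Icc τ T, P₁ s ≤ N₁ := by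
    intro s hs
    refine le_trans (hgr₁ s hs) ?_
    rw [hN₁]
    apply mul_le_mul_of_nonneg_left _ hc₁0
    apply Real.exp_le_exp.mpr
    have : T - τ ≤ T := by linarith only [hτ0]
    exact mul_le_mul_of_nonneg_left this hL₁pos.le
  -- Step 2 : Grönwall for P₂
  have key₂ : ∀ s ∈ Set.Icc τ T, P₂ s ≤ c₂ + L₂ * ∫ r in s..T, P₂ r := by
    intro s hs
    have hsT : s ≤ T := hs.2
    have hIP : IntervalIntegrable P₂ volume s T :=
      (hP₂c.mono (Set.Icc_subset_Icc hs.1 le_rfl)).intervalIntegrable_of_Icc hsT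
    have hlin : IntervalIntegrable (fun r => L₂ * P₂ r + M₂c) volume s T :=
      ((continuousOn_const.mul (hP₂c.mono (Set.Icc_subset_Icc hs.1 le_rfl))).add
        continuousOn_const).intervalIntegrable_of_Icc hsT
    have hmono := intervalIntegral.integral_mono_ae_restrict hsT (hint2 s hs) hlin ?_
    · have heval : (∫ r in s..T, (L₂ * P₂ r + M₂c))
          = L₂ * (∫ r in s..T, P₂ r) + (T - s) * M₂c := by
        rw [intervalIntegral.integral_add (hIP.const_mul L₂) intervalIntegrable_const,
          intervalIntegral.integral_const_mul, intervalIntegral.integral_const]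
        simp [smul_eq_mul]
      have hs0 : 0 ≤ s := le_trans hτ0 hs.1
      have hTs : (T - s) * M₂c ≤ T * M₂c := by
        apply mul_le_mul_of_nonneg_right _ hM₂c0
        linarith
      rw [heq₂ s hs, hc₂]
      rw [heval] at hmono
      linarith only [hmono, hTs]
    · filter_upwards [haefacts s hs] with r hr
      obtain ⟨hrτ, hr0, hq₁, hq₂, hr₁, hr₂, hd₂⟩ := hr
      have hp₁ : 0 ≤ P₁ r := (hnn r hrτ).1
      have hp₂ : 0 ≤ P₂ r := (hnn r hrτ).2
      have hθraw := Th1_abs_le hδ (bdB₁ r hr0) (bdB₂ r hr0) (bdC r hr0) (bdD₁ r hr0)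
        (bdD₂ r hr0) hr₁ hr₂ hd₂ hp₁ hp₂
      have hraw : MB₁ + MB₂ * MD₁ / δ + 2 * MD₁ * (MC + MD₂ * ((MB₂ + MD₂ * MC) / δ ^ 2))
          = coefθ := by rw [hcoefθ, hKB]
      rw [hraw] at hθraw
      have hθM : |Th1 (B₁ r) (B₂ r) (C r) (D₁ r) (D₂ r) (R₁ r) (R₂ r) (P₁ r) (P₂ r)| ≤ Mθ := by
        refine le_trans hθraw ?_
        rw [hMθ]
        gcongr
        exact hbd₁ r hrτ
      have h := rhs2_le (q₂ := Q₂ r) hδ (bdA r hr0) (bdB₁ r hr0) (bdB₂ r hr0) (bdC r hr0) (bdD₁ r hr0)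
        (bdR₂ r hr0) hr₂ hd₂ hp₂ hθM
      have hQle : Q₂ r ≤ MQ₂ := le_trans (le_abs_self _) (bdQ₂ r hr0)
      have hLle : (2 * (MA + MB₁ * Mθ) + 2 * MB₂ * (MD₁ / δ) * Mθ + MC ^ 2) * P₂ r
          ≤ L₂ * P₂ r := by
        apply mul_le_mul_of_nonneg_right _ hp₂
        rw [hL₂]; linarith only [hp₂]
      have hM₂eq : MQ₂ + MR₂ * (MD₁ / δ) ^ 2 * Mθ ^ 2 = M₂c := hM₂c.symm
      linarith only [h, hQle, hLle, hM₂eq]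
  have hgr₂ := gronwall_backward hτT hc₂0 hL₂pos hP₂c key₂
  have hbd₂ : ∀ s ∈ Set.Icc τ T, P₂ s ≤ N₂ := by
    intro s hs
    refine le_trans (hgr₂ s hs) ?_
    rw [hN₂]
    apply mul_le_mul_of_nonneg_left _ hc₂0
    apply Real.exp_le_exp.mpr
    have : T - τ ≤ T := by linarith only [hτ0]
    exact mul_le_mul_of_nonneg_left this hL₂pos.le
  intro s hs
  linarith only [hbd₁ s hs, hbd₂ s hs]

end ScalarERE
end
end

section
/- Let T > 0, n, m₂ ∈ ℕ, and let B₂ : [0,T] → ℝ^{n×m₂} and R₂ : [0,T] → Sym_{m₂}(ℝ) be continuously differentiable. Assume there exist δ > 0 and ν > 0 such that R₂(s) ⪰ δ·I and S(s) := B₂(s)R₂(s)⁻¹B₂(s)ᵀ ⪰ ν·I for all s ∈ [0,T]. Then the functions s ↦ S(s), s ↦ R(s) := S(s)^{1/2}, and s ↦ 𝒯(s) := R(s)⁻¹ are continuously differentiable on [0,T], and for every s ∈ [0,T] one has ‖R'(s)‖_F ≤ ‖S'(s)‖_F / (2√ν) and ‖𝒯'(s)‖_F ≤ ‖S'(s)‖_F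 / (2ν^{3/2}). -/
open Matrix

noncomputable section

/-- The Frobenius norm of a real matrix. -/
def fnorm {a b : ℕ} (M : Matrix (Fin a) (Fin b) ℝ) : ℝ :=
  Real.sqrt (∑ i, ∑ j, (M i j) ^ 2)

/-- `S(s) = B₂(s) R₂(s)⁻¹ B₂(s)ᵀ`. -/
def Sfun {n m2 : ℕ} (B₂ : ℝ → Matrix (Fin n) (Fin m2) ℝ)
    (R₂ : ℝ → Matrix (Fin m2) (Fin m2) ℝ) (s : ℝ) : Matrix (Fin n) (Fin n) ℝ :=
  B₂ s * (R₂ s)⁻¹ * (B₂ s)ᵀ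

/-! Under the Frobenius inner product `⟪X, Y⟫ = (Xᵀ * Y).trace`, `A ⪰ a • 1` gives
`⟪X, A X⟫ ≥ a ‖X‖²`, so a solution of the Sylvester equation `A X + X B = C` with `A ⪰ a • 1`,
`B ⪰ b • 1` satisfies `(a + b) ‖X‖ ≤ ‖C‖`. The square root obeys `R ⪰ √ν • 1` and
`R(r) (R(r) - R(s)) + (R(r) - R(s)) R(s) = S(r) - S(s)`; hence `R` is Lipschitz in `S`, and the
same identity with `R(r) - R(s) - (r - s) D` shows that `R'(s)` is the solution `D` of
`R D + D R = S'`. The bounds then follow from the Sylvester bound and from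
`𝒯' = -R⁻¹ R' R⁻¹`, where `ν ‖R⁻¹ X R⁻¹‖ ≤ ‖X‖`. -/

open Filter Topology Asymptotics
open scoped Matrix.Norms.Frobenius MatrixOrder

theorem fnorm_eq_frobenius_norm {a b : ℕ} (M : Matrix (Fin a) (Fin b) ℝ) : fnorm M = ‖M‖ := by
  rw [fnorm, frobenius_norm_def, Real.sqrt_eq_rpow]
  simp

theorem mul_le_of_mul_sq_le_mul {a x t : ℝ} (hx : 0 ≤ x) (ht : 0 ≤ t)
    (h : a * x ^ 2 ≤ x * t) : a * x ≤ t := by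
  rcases hx.eq_or_lt with rfl | hx
  · simpa using ht
  · nlinarith

theorem continuousWithinAt_of_norm_sub_le {X E : Type*} [TopologicalSpace X]
    [SeminormedAddCommGroup E] {f : X → E} {g : X → ℝ} {s : Set X} {x : X}
    (hg : ContinuousWithinAt g s x) (hgx : g x = 0) (h : ∀ y ∈ s, ‖f y - f x‖ ≤ g y) :
    ContinuousWithinAt f s x := by
  rw [ContinuousWithinAt, tendsto_iff_norm_sub_tendsto_zero]
  refine squeeze_zero' (Eventually.of_forall fun _ => norm_nonneg _)
    (eventually_mem_nhdsWithin.mono h) ?_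
  rw [← hgx]
  exact hg

namespace Matrix

section Frobenius

variable {m n : Type*} [Fintype m] [Fintype n]

theorem frobenius_norm_eq_norm_toLp_vec (A : Matrix m n ℝ) :
    ‖A‖ = ‖WithLp.toLp 2 A.vec‖ := by
  rw [frobenius_norm_def, EuclideanSpace.norm_eq, Real.sqrt_eq_rpow, Fintype.sum_prod_type,
    Finset.sum_comm]
  simp [vec]

theorem trace_transpose_mul_le_frobenius_norm (A B : Matrix m n ℝ) :
    (Aᵀ * B).trace ≤ ‖A‖ * ‖B‖ := by
  rw [← vec_dotProduct_vec, frobenius_norm_eq_norm_toLp_vec, frobenius_norm_eq_norm_toLp_vec]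
  have := real_inner_le_norm (WithLp.toLp 2 A.vec : EuclideanSpace ℝ (n × m))
    (WithLp.toLp 2 B.vec)
  simpa [EuclideanSpace.inner_eq_star_dotProduct, dotProduct_comm] using this

theorem frobenius_norm_sq_eq_trace (A : Matrix m n ℝ) : ‖A‖ ^ 2 = (Aᵀ * A).trace := by
  rw [← vec_dotProduct_vec, frobenius_norm_eq_norm_toLp_vec, ← real_inner_self_eq_norm_sq,
    EuclideanSpace.inner_eq_star_dotProduct]
  simp

def frobeniusEquivPi : Matrix m n ℝ ≃L[ℝ] (m → n → ℝ) :=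
  (ofLinearEquiv ℝ).symm.toContinuousLinearEquiv

theorem continuousOn_iff_entries {X : Type*} [TopologicalSpace X] {f : X → Matrix m n ℝ}
    {s : Set X} : ContinuousOn f s ↔ ∀ i j, ContinuousOn (fun x => f x i j) s := by
  rw [← frobeniusEquivPi.comp_continuousOn_iff]
  simp only [continuousOn_pi]
  rfl

theorem contDiffOn_iff_entries {E : Type*} [NormedAddCommGroup E] [NormedSpace ℝ E]
    {k : WithTop ℕ∞} {f : E → Matrix m n ℝ} {s : Set E} :
    ContDiffOn ℝ k f s ↔ ∀ i j, ContDiffOn ℝ k (fun x => f x i j) s := by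
  rw [← frobeniusEquivPi.comp_contDiffOn_iff]
  simp only [contDiffOn_pi]
  rfl

theorem hasDerivWithinAt_iff_entries {f : ℝ → Matrix m n ℝ} {f' : Matrix m n ℝ} {s : Set ℝ}
    {x : ℝ} :
    HasDerivWithinAt f f' s x ↔ ∀ i j, HasDerivWithinAt (fun t => f t i j) (f' i j) s x := by
  let e : Matrix m n ℝ ≃L[ℝ] (m → n → ℝ) := frobeniusEquivPi
  have : HasDerivWithinAt f f' s x ↔ HasDerivWithinAt (e ∘ f) (e f') s x :=
    ⟨fun h => e.hasFDerivAt.comp_hasDerivWithinAt x h,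
      fun h => e.symm.hasFDerivAt.comp_hasDerivWithinAt x h⟩
  rw [this]
  simp only [hasDerivWithinAt_pi]
  rfl

end Frobenius

section Inverse

variable {n : Type*} [Fintype n] [DecidableEq n]

theorem _root_.HasDerivWithinAt.matrix_inv {f : ℝ → Matrix n n ℝ} {f' : Matrix n n ℝ}
    {s : Set ℝ} {x : ℝ} (hf : HasDerivWithinAt f f' s x) (hx : IsUnit (f x)) :
    HasDerivWithinAt (fun t => (f t)⁻¹) (-((f x)⁻¹ * f' * (f x)⁻¹)) s x := by
  have hinv := hasFDerivAt_ringInverse (𝕜 := ℝ) hx.unit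
  rw [coe_units_inv, hx.unit_spec] at hinv
  refine ((hinv.comp_hasDerivWithinAt x hf).congr (fun y _ => nonsing_inv_eq_ringInverse _)
    (nonsing_inv_eq_ringInverse _)).congr_deriv ?_
  simp

theorem _root_.ContDiffOn.matrix_inv {E : Type*} [NormedAddCommGroup E] [NormedSpace ℝ E]
    {k : WithTop ℕ∞} {f : E → Matrix n n ℝ} {s : Set E} (hf : ContDiffOn ℝ k f s)
    (hs : ∀ x ∈ s, IsUnit (f x)) : ContDiffOn ℝ k (fun x => (f x)⁻¹) s := by
  intro x hx
  have hinv := contDiffAt_ringInverse ℝ (n := k) (hs x hx).unit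
  rw [(hs x hx).unit_spec] at hinv
  exact (hinv.comp_contDiffWithinAt x (hf x hx)).congr
    (fun y _ => nonsing_inv_eq_ringInverse _) (nonsing_inv_eq_ringInverse _)

end Inverse

namespace PosSemidef

theorem posDef_of_sub_smul_one {m : Type*} [DecidableEq m] {A : Matrix m m ℝ} {c : ℝ}
    (hc : 0 < c) (hA : (A - c • 1).PosSemidef) : A.PosDef := by
  simpa using PosDef.posSemidef_add hA (PosDef.one.smul hc)

variable {m n : Type*} [Fintype m] [Fintype n] {A : Matrix m m ℝ} {B : Matrix n n ℝ} {a b : ℝ}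

theorem sub_sqrt_smul_one [DecidableEq m] {ν : ℝ} (hA : A.PosSemidef)
    (h : (A * A - ν • 1).PosSemidef) : (A - √ν • 1).PosSemidef := by
  have hsa : IsSelfAdjoint A := hA.isHermitian
  have hsq : algebraMap ℝ _ ν ≤ A ^ 2 := by
    rwa [Algebra.algebraMap_eq_smul_one, sq, le_iff]
  rw [algebraMap_le_iff_le_spectrum (hsa.pow 2)] at hsq
  suffices algebraMap ℝ _ √ν ≤ A by rwa [Algebra.algebraMap_eq_smul_one, le_iff] at this
  rw [algebraMap_le_iff_le_spectrum hsa]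
  intro x hx
  have hx0 : 0 ≤ x := spectrum_nonneg_of_nonneg hA.nonneg hx
  exact (Real.sqrt_le_left hx0).mpr (hsq _ (spectrum.pow_mem_pow A 2 hx))

theorem mul_frobenius_norm_sq_le_trace_left [DecidableEq m] (hA : (A - a • 1).PosSemidef)
    (X : Matrix m n ℝ) :
    a * ‖X‖ ^ 2 ≤ (Xᵀ * A * X).trace := by
  have := (hA.conjTranspose_mul_mul_same X).trace_nonneg
  rw [frobenius_norm_sq_eq_trace]
  simpa [conjTranspose_eq_transpose_of_trivial, Matrix.mul_sub, Matrix.sub_mul, trace_sub]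
    using this

theorem mul_frobenius_norm_sq_le_trace_right [DecidableEq n] (hB : (B - b • 1).PosSemidef)
    (X : Matrix m n ℝ) :
    b * ‖X‖ ^ 2 ≤ (Xᵀ * X * B).trace := by
  have := (hB.mul_mul_conjTranspose_same X).trace_nonneg
  rw [frobenius_norm_sq_eq_trace]
  simpa [conjTranspose_eq_transpose_of_trivial, Matrix.mul_sub, Matrix.sub_mul, trace_sub,
    trace_mul_comm X, trace_mul_cycle X] using this

theorem mul_frobenius_norm_le_left [DecidableEq m] (hA : (A - a • 1).PosSemidef)
    (X : Matrix m n ℝ) :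
    a * ‖X‖ ≤ ‖A * X‖ := by
  refine mul_le_of_mul_sq_le_mul (norm_nonneg _) (norm_nonneg _) ?_
  calc a * ‖X‖ ^ 2 ≤ (Xᵀ * A * X).trace := hA.mul_frobenius_norm_sq_le_trace_left X
    _ ≤ ‖X‖ * ‖A * X‖ := by
      rw [Matrix.mul_assoc]
      exact trace_transpose_mul_le_frobenius_norm _ _

theorem mul_frobenius_norm_le_right [DecidableEq n] (hB : (B - b • 1).PosSemidef)
    (X : Matrix m n ℝ) :
    b * ‖X‖ ≤ ‖X * B‖ := by
  refine mul_le_of_mul_sq_le_mul (norm_nonneg _) (norm_nonneg _) ?_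
  calc b * ‖X‖ ^ 2 ≤ (Xᵀ * X * B).trace := hB.mul_frobenius_norm_sq_le_trace_right X
    _ ≤ ‖X‖ * ‖X * B‖ := by
      rw [Matrix.mul_assoc]
      exact trace_transpose_mul_le_frobenius_norm _ _

theorem add_mul_frobenius_norm_le_sylvester [DecidableEq m] [DecidableEq n]
    (hA : (A - a • 1).PosSemidef) (hB : (B - b • 1).PosSemidef) (X : Matrix m n ℝ) :
    (a + b) * ‖X‖ ≤ ‖A * X + X * B‖ := by
  refine mul_le_of_mul_sq_le_mul (norm_nonneg _) (norm_nonneg _) ?_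
  have hAX := hA.mul_frobenius_norm_sq_le_trace_left X
  have hXB := hB.mul_frobenius_norm_sq_le_trace_right X
  calc (a + b) * ‖X‖ ^ 2 ≤ (Xᵀ * (A * X + X * B)).trace := by
        rw [Matrix.mul_add, trace_add, ← Matrix.mul_assoc, ← Matrix.mul_assoc]
        linarith
    _ ≤ ‖X‖ * ‖A * X + X * B‖ := trace_transpose_mul_le_frobenius_norm _ _

theorem sq_mul_frobenius_norm_inv_mul_mul_inv_le [DecidableEq m] {c : ℝ} (hc : 0 < c)
    (hA : (A - c • 1).PosSemidef) (X : Matrix m m ℝ) : c ^ 2 * ‖A⁻¹ * X * A⁻¹‖ ≤ ‖X‖ := by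
  have hdet := (isUnit_iff_isUnit_det _).mp (hA.posDef_of_sub_smul_one hc).isUnit
  calc c ^ 2 * ‖A⁻¹ * X * A⁻¹‖ ≤ c * ‖A⁻¹ * X * A⁻¹ * A‖ := by
        rw [sq, mul_assoc]
        exact mul_le_mul_of_nonneg_left (hA.mul_frobenius_norm_le_right _) hc.le
    _ ≤ ‖A * (A⁻¹ * X * A⁻¹ * A)‖ := hA.mul_frobenius_norm_le_left _
    _ = ‖X‖ := by
      rw [nonsing_inv_mul_cancel_right _ _ hdet, mul_nonsing_inv_cancel_left _ _ hdet]

theorem exists_mul_add_mul_eq [DecidableEq m] {c : ℝ} (hc : 0 < c)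
    (hA : (A - c • 1).PosSemidef) (C : Matrix m m ℝ) : ∃ X, A * X + X * A = C := by
  let L : Matrix m m ℝ →ₗ[ℝ] Matrix m m ℝ := LinearMap.mulLeft ℝ A + LinearMap.mulRight ℝ A
  have hL : Function.Injective L := by
    rw [← LinearMap.ker_eq_bot, LinearMap.ker_eq_bot']
    intro X hX
    have := hA.add_mul_frobenius_norm_le_sylvester hA X
    rw [show A * X + X * A = 0 from hX, norm_zero] at this
    exact norm_le_zero_iff.mp (nonpos_of_mul_nonpos_right this (by linarith))
  exact LinearMap.injective_iff_surjective.mp hL C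

end PosSemidef

end Matrix

section SquareRootPath

variable {n : Type*} [Fintype n] [DecidableEq n] {I : Set ℝ} {c : ℝ} {R S : ℝ → Matrix n n ℝ}
  {s : ℝ}

theorem continuousWithinAt_of_mul_self_eq (hc : 0 < c)
    (hR : ∀ r ∈ I, (R r - c • 1).PosSemidef) (hRS : ∀ r ∈ I, R r * R r = S r) (hs : s ∈ I)
    (hS : ContinuousWithinAt S I s) : ContinuousWithinAt R I s := by
  refine continuousWithinAt_of_norm_sub_le (g := fun r => ‖S r - S s‖ / (c + c))
    ((hS.sub continuousWithinAt_const).norm.div_const _) (by simp) fun r hr => ?_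
  rw [le_div_iff₀ (by linarith), mul_comm]
  have := (hR r hr).add_mul_frobenius_norm_le_sylvester (hR s hs) (R r - R s)
  rwa [show R r * (R r - R s) + (R r - R s) * R s = S r - S s by
    rw [← hRS r hr, ← hRS s hs]; noncomm_ring] at this

theorem hasDerivWithinAt_of_mul_self_eq (hc : 0 < c)
    (hR : ∀ r ∈ I, (R r - c • 1).PosSemidef) (hRS : ∀ r ∈ I, R r * R r = S r) (hs : s ∈ I)
    {S' D : Matrix n n ℝ} (hS : HasDerivWithinAt S S' I s) (hD : R s * D + D * R s = S') :
    HasDerivWithinAt R D I s := by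
  have hRc := continuousWithinAt_of_mul_self_eq hc hR hRS hs hS.continuousWithinAt
  replace hS := hasDerivWithinAt_iff_isLittleO.mp hS
  refine hasDerivWithinAt_iff_isLittleO.mpr ?_
  have hsmall : (fun r => (r - s) • ((R r - R s) * D)) =o[𝓝[I] s] fun r => r - s := by
    have hRD : Tendsto (fun r => (R r - R s) * D) (𝓝[I] s) (𝓝 0) := by
      simpa using (show ContinuousWithinAt (fun r => (R r - R s) * D) I s by fun_prop).tendsto
    simpa using (isBigO_refl (fun r => r - s) _).smul_isLittleO ((isLittleO_one_iff ℝ).2 hRD)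
  refine IsBigO.trans_isLittleO (IsBigO.of_bound (c + c)⁻¹ ?_) (hS.sub hsmall)
  filter_upwards [self_mem_nhdsWithin] with r hr
  have key := (hR r hr).add_mul_frobenius_norm_le_sylvester (hR s hs) (R r - R s - (r - s) • D)
  rw [show R r * (R r - R s - (r - s) • D) + (R r - R s - (r - s) • D) * R s
      = S r - S s - (r - s) • S' - (r - s) • ((R r - R s) * D) by
    rw [← hRS r hr, ← hRS s hs, ← hD]
    simp only [Matrix.mul_sub, Matrix.sub_mul, Matrix.mul_smul, Matrix.smul_mul]
    module] at key
  rw [inv_mul_eq_div, le_div_iff₀ (by linarith), mul_comm]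
  exact key

theorem continuousOn_of_mul_add_mul_eq (hc : 0 < c) (hR : ∀ r ∈ I, (R r - c • 1).PosSemidef)
    (hRc : ContinuousOn R I) {S' D : ℝ → Matrix n n ℝ} (hS' : ContinuousOn S' I)
    (hD : ∀ r ∈ I, R r * D r + D r * R r = S' r) : ContinuousOn D I := by
  intro s hs
  have hg : ContinuousWithinAt
      (fun r => ‖S' r - S' s - ((R r - R s) * D s + D s * (R r - R s))‖ / (c + c)) I s := by
    have := hS' s hs
    have := hRc s hs
    fun_prop
  refine continuousWithinAt_of_norm_sub_le hg (by simp) fun r hr => ?_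
  rw [le_div_iff₀ (by linarith), mul_comm]
  have := (hR r hr).add_mul_frobenius_norm_le_sylvester (hR r hr) (D r - D s)
  rwa [show R r * (D r - D s) + (D r - D s) * R r
      = S' r - S' s - ((R r - R s) * D s + D s * (R r - R s)) by
    rw [← hD r hr, ← hD s hs]; noncomm_ring] at this

theorem exists_hasDerivWithinAt_of_mul_self_eq (hc : 0 < c)
    (hR : ∀ r ∈ I, (R r - c • 1).PosSemidef) (hRS : ∀ r ∈ I, R r * R r = S r)
    {S' : ℝ → Matrix n n ℝ} (hS : ∀ s ∈ I, HasDerivWithinAt S (S' s) I s)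
    (hS' : ContinuousOn S' I) :
    ∃ R' : ℝ → Matrix n n ℝ, ContinuousOn R' I ∧
      ∀ s ∈ I, HasDerivWithinAt R (R' s) I s ∧ R s * R' s + R' s * R s = S' s := by
  have hR'ex : ∀ s, ∃ D, s ∈ I → R s * D + D * R s = S' s := by
    intro s
    by_cases hs : s ∈ I
    · exact ((hR s hs).exists_mul_add_mul_eq hc (S' s)).imp fun _ hD _ => hD
    · exact ⟨0, fun h => (hs h).elim⟩
  choose R' hR' using hR'ex
  have hRd : ∀ s ∈ I, HasDerivWithinAt R (R' s) I s := fun s hs =>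
    hasDerivWithinAt_of_mul_self_eq hc hR hRS hs (hS s hs) (hR' s hs)
  refine ⟨R', continuousOn_of_mul_add_mul_eq hc hR (fun s hs => (hRd s hs).continuousWithinAt)
    hS' hR', fun s hs => ⟨hRd s hs, hR' s hs⟩⟩

end SquareRootPath

theorem frobenius_norm_le_of_mul_add_mul_eq {n : Type*} [Fintype n] [DecidableEq n]
    {R D S' : Matrix n n ℝ} {ν : ℝ} (hν : 0 < ν) (hR : (R - √ν • 1).PosSemidef)
    (hD : R * D + D * R = S') :
    ‖D‖ ≤ ‖S'‖ / (2 * √ν) ∧ ‖R⁻¹ * D * R⁻¹‖ ≤ ‖S'‖ / (2 * ν * √ν) := by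
  have hc : 0 < √ν := Real.sqrt_pos.mpr hν
  have hDS' : (√ν + √ν) * ‖D‖ ≤ ‖S'‖ := hD ▸ hR.add_mul_frobenius_norm_le_sylvester hR D
  have hinv := hR.sq_mul_frobenius_norm_inv_mul_mul_inv_le hc D
  rw [Real.sq_sqrt hν.le] at hinv
  rw [le_div_iff₀ (by positivity), le_div_iff₀ (by positivity)]
  constructor
  · linarith
  · calc ‖R⁻¹ * D * R⁻¹‖ * (2 * ν * √ν) = 2 * √ν * (ν * ‖R⁻¹ * D * R⁻¹‖) := by ring
      _ ≤ 2 * √ν * ‖D‖ := by gcongr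
      _ ≤ ‖S'‖ := by linarith

theorem contDiffOn_Sfun {n m2 : ℕ} {B₂ : ℝ → Matrix (Fin n) (Fin m2) ℝ}
    {R₂ : ℝ → Matrix (Fin m2) (Fin m2) ℝ} {I : Set ℝ} {k : WithTop ℕ∞}
    (hB₂ : ∀ i j, ContDiffOn ℝ k (fun s => B₂ s i j) I)
    (hR₂ : ∀ i j, ContDiffOn ℝ k (fun s => R₂ s i j) I) (hR₂unit : ∀ s ∈ I, IsUnit (R₂ s)) :
    ContDiffOn ℝ k (Sfun B₂ R₂) I := by
  have hinv := contDiffOn_iff_entries.mp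
    ((contDiffOn_iff_entries.mpr hR₂).matrix_inv hR₂unit)
  refine contDiffOn_iff_entries.mpr fun i j => ?_
  simp only [Sfun, mul_apply, transpose_apply]
  exact ContDiffOn.sum fun l _ => (ContDiffOn.sum fun p _ => (hB₂ i p).mul (hinv p l)).mul
    (hB₂ j l)

theorem stmt_4_general (n m2 : ℕ) (T δ ν : ℝ) (hT : 0 < T) (hδ : 0 < δ) (hν : 0 < ν)
    (B₂ : ℝ → Matrix (Fin n) (Fin m2) ℝ) (R₂ : ℝ → Matrix (Fin m2) (Fin m2) ℝ)
    (hB₂ : ∀ i j, ContDiffOn ℝ 1 (fun s => B₂ s i j) (Set.Icc 0 T))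
    (hR₂ : ∀ i j, ContDiffOn ℝ 1 (fun s => R₂ s i j) (Set.Icc 0 T))
    (hR₂pos : ∀ s ∈ Set.Icc (0 : ℝ) T,
      (R₂ s - δ • (1 : Matrix (Fin m2) (Fin m2) ℝ)).PosSemidef)
    (hS : ∀ s ∈ Set.Icc (0 : ℝ) T,
      (Sfun B₂ R₂ s - ν • (1 : Matrix (Fin n) (Fin n) ℝ)).PosSemidef)
    (R : ℝ → Matrix (Fin n) (Fin n) ℝ)
    (hR : ∀ s ∈ Set.Icc (0 : ℝ) T, (R s).PosSemidef ∧ R s * R s = Sfun B₂ R₂ s) :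
    ∃ S' R' T' : ℝ → Matrix (Fin n) (Fin n) ℝ,
      (∀ i j, ContinuousOn (fun s => S' s i j) (Set.Icc 0 T)) ∧
      (∀ i j, ContinuousOn (fun s => R' s i j) (Set.Icc 0 T)) ∧
      (∀ i j, ContinuousOn (fun s => T' s i j) (Set.Icc 0 T)) ∧
      (∀ s ∈ Set.Icc (0 : ℝ) T, ∀ i j,
        HasDerivWithinAt (fun r => Sfun B₂ R₂ r i j) (S' s i j) (Set.Icc 0 T) s ∧
        HasDerivWithinAt (fun r => R r i j) (R' s i j) (Set.Icc 0 T) s ∧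
        HasDerivWithinAt (fun r => (R r)⁻¹ i j) (T' s i j) (Set.Icc 0 T) s) ∧
      (∀ s ∈ Set.Icc (0 : ℝ) T,
        fnorm (R' s) ≤ fnorm (S' s) / (2 * Real.sqrt ν) ∧
        fnorm (T' s) ≤ fnorm (S' s) / (2 * ν * Real.sqrt ν)) := by
  set I := Set.Icc (0 : ℝ) T
  have hc : 0 < √ν := Real.sqrt_pos.mpr hν
  have hRν : ∀ s ∈ I, (R s - √ν • 1).PosSemidef := fun s hs =>
    (hR s hs).1.sub_sqrt_smul_one ((hR s hs).2 ▸ hS s hs)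
  have hSC1 : ContDiffOn ℝ 1 (Sfun B₂ R₂) I :=
    contDiffOn_Sfun hB₂ hR₂ fun s hs => ((hR₂pos s hs).posDef_of_sub_smul_one hδ).isUnit
  set S' := derivWithin (Sfun B₂ R₂) I
  have hSd : ∀ s ∈ I, HasDerivWithinAt (Sfun B₂ R₂) (S' s) I s := fun s hs =>
    (hSC1.differentiableOn one_ne_zero s hs).hasDerivWithinAt
  have hS'c : ContinuousOn S' I := hSC1.continuousOn_derivWithin (uniqueDiffOn_Icc hT) le_rfl
  obtain ⟨R', hR'c, hR'⟩ :=
    exists_hasDerivWithinAt_of_mul_self_eq hc hRν (fun s hs => (hR s hs).2) hSd hS'c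
  set T' := fun s => -((R s)⁻¹ * R' s * (R s)⁻¹)
  have hTd : ∀ s ∈ I, HasDerivWithinAt (fun r => (R r)⁻¹) (T' s) I s := fun s hs =>
    (hR' s hs).1.matrix_inv ((hRν s hs).posDef_of_sub_smul_one hc).isUnit
  have hT'c : ContinuousOn T' I := by
    have hinv : ContinuousOn (fun r => (R r)⁻¹) I := fun s hs => (hTd s hs).continuousWithinAt
    fun_prop
  refine ⟨S', R', T', continuousOn_iff_entries.mp hS'c, continuousOn_iff_entries.mp hR'c,
    continuousOn_iff_entries.mp hT'c, fun s hs i j =>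
      ⟨hasDerivWithinAt_iff_entries.mp (hSd s hs) i j,
        hasDerivWithinAt_iff_entries.mp (hR' s hs).1 i j,
        hasDerivWithinAt_iff_entries.mp (hTd s hs) i j⟩,
    fun s hs => ?_⟩
  simpa only [fnorm_eq_frobenius_norm, T', norm_neg] using
    frobenius_norm_le_of_mul_add_mul_eq hν (hRν s hs) (hR' s hs).2

/-- If `B₂` and `R₂` are continuously differentiable with `R₂ ⪰ δI` and
`S := B₂R₂⁻¹B₂ᵀ ⪰ νI` on `[0,T]`, then `S`, its positive semidefinite square root
`R = S^{1/2}`, and `𝒯 = R⁻¹` are continuously differentiable on `[0,T]`, with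
`‖R'(s)‖_F ≤ ‖S'(s)‖_F/(2√ν)` and `‖𝒯'(s)‖_F ≤ ‖S'(s)‖_F/(2ν^{3/2})`. -/
theorem stmt_4 (n m2 : ℕ) (T δ ν : ℝ) (hT : 0 < T) (hδ : 0 < δ) (hν : 0 < ν)
    (B₂ : ℝ → Matrix (Fin n) (Fin m2) ℝ) (R₂ : ℝ → Matrix (Fin m2) (Fin m2) ℝ)
    (hB₂ : ∀ i j, ContDiffOn ℝ 1 (fun s => B₂ s i j) (Set.Icc 0 T))
    (hR₂ : ∀ i j, ContDiffOn ℝ 1 (fun s => R₂ s i j) (Set.Icc 0 T))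
    (hR₂symm : ∀ s ∈ Set.Icc (0 : ℝ) T, (R₂ s).IsSymm)
    (hR₂pos : ∀ s ∈ Set.Icc (0 : ℝ) T,
      (R₂ s - δ • (1 : Matrix (Fin m2) (Fin m2) ℝ)).PosSemidef)
    (hS : ∀ s ∈ Set.Icc (0 : ℝ) T,
      (Sfun B₂ R₂ s - ν • (1 : Matrix (Fin n) (Fin n) ℝ)).PosSemidef)
    (R : ℝ → Matrix (Fin n) (Fin n) ℝ)
    (hR : ∀ s ∈ Set.Icc (0 : ℝ) T, (R s).PosSemidef ∧ R s * R s = Sfun B₂ R₂ s) :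
    ∃ S' R' T' : ℝ → Matrix (Fin n) (Fin n) ℝ,
      (∀ i j, ContinuousOn (fun s => S' s i j) (Set.Icc 0 T)) ∧
      (∀ i j, ContinuousOn (fun s => R' s i j) (Set.Icc 0 T)) ∧
      (∀ i j, ContinuousOn (fun s => T' s i j) (Set.Icc 0 T)) ∧
      (∀ s ∈ Set.Icc (0 : ℝ) T, ∀ i j,
        HasDerivWithinAt (fun r => Sfun B₂ R₂ r i j) (S' s i j) (Set.Icc 0 T) s ∧
        HasDerivWithinAt (fun r => R r i j) (R' s i j) (Set.Icc 0 T) s ∧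
        HasDerivWithinAt (fun r => (R r)⁻¹ i j) (T' s i j) (Set.Icc 0 T) s) ∧
      (∀ s ∈ Set.Icc (0 : ℝ) T,
        fnorm (R' s) ≤ fnorm (S' s) / (2 * Real.sqrt ν) ∧
        fnorm (T' s) ≤ fnorm (S' s) / (2 * ν * Real.sqrt ν)) :=
  stmt_4_general n m2 T δ ν hT hδ hν B₂ R₂ hB₂ hR₂ hR₂pos hS R hR
end
end

section
/- Let T > 0 and let A, B₁, B₂, Q₁, Q₂, R₁, R₂, G₁, G₂, K ∈ ℝ be constants with R₁ > 0, R₂ > 0, G₁ > 0, G₂ > 0, Q₁ > 0, and B₂ ≠ 0. Suppose x, p₂, y, p₁ : [0,T] → ℝ are differentiable, and define pointwise u₂(s) = sgn(B₁·y(s)·p₂(s))·K and u₁(s) = u₂(s)x(s) − R₁⁻¹B₁p₁(s). Assume on [0,T]: x' = (A+B₁u₂)x + B₁u₁ − B₂²R₂⁻¹p₂, p₂' = −(A+B₁u₂)p₂ − Q₂x, y' = (A+B₁u₂)y + B₂²R₂⁻¹p₁, p₁' = −(A+B₁u₂)p₁ + Q₂y − Q₁x − R₁u₂(u₂x+u₁),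 together with the terminal conditions p₁(T) = −G₂y(T) + G₁x(T) and p₂(T) = G₂x(T). If y(s) = 0 for all s ∈ [0,T], then x(s) = 0 for all s ∈ [0,T]; in particular x(0) = 0. -/
/-- If `f` vanishes on `[0,T]` and has derivative `d` at an interior point, then `d = 0`. -/
lemma aux_deriv_zero {T : ℝ} {f : ℝ → ℝ} {d s : ℝ} (hs : s ∈ Set.Ioo (0 : ℝ) T)
    (hf : ∀ t ∈ Set.Icc (0 : ℝ) T, f t = 0) (h : HasDerivAt f d s) : d = 0 := by
  have hev : f =ᶠ[nhds s] fun _ => (0 : ℝ) := by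
    filter_upwards [Ioo_mem_nhds hs.1 hs.2] with t ht
    exact hf t (Set.Ioo_subset_Icc_self ht)
  have h0 : HasDerivAt f 0 s := (hasDerivAt_const s (0 : ℝ)).congr_of_eventuallyEq hev
  exact h.unique h0

/-- Extend vanishing from the open interval to the closed interval by continuity. -/
lemma aux_zero_Icc {T : ℝ} (hT : 0 < T) {f : ℝ → ℝ}
    (hc : ∀ s ∈ Set.Icc (0 : ℝ) T, ContinuousAt f s)
    (h : ∀ s ∈ Set.Ioo (0 : ℝ) T, f s = 0) : ∀ s ∈ Set.Icc (0 : ℝ) T, f s = 0 := by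
  intro s hs
  have hscl : s ∈ closure (Set.Ioo (0 : ℝ) T) := by
    rw [closure_Ioo hT.ne]
    exact hs
  have hne : (nhdsWithin s (Set.Ioo (0 : ℝ) T)).NeBot :=
    mem_closure_iff_nhdsWithin_neBot.mp hscl
  have h1 : Filter.Tendsto f (nhdsWithin s (Set.Ioo (0 : ℝ) T)) (nhds (f s)) :=
    ((hc s hs).tendsto).mono_left nhdsWithin_le_nhds
  have h2 : Filter.Tendsto f (nhdsWithin s (Set.Ioo (0 : ℝ) T)) (nhds 0) := by
    refine Filter.Tendsto.congr' ?_ tendsto_const_nhds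
    filter_upwards [self_mem_nhdsWithin] with t ht
    exact (h t ht).symm
  exact tendsto_nhds_unique h1 h2

/-- Time-inconsistency of the closed-loop Stackelberg solution (contradiction step):
for the necessary-condition ODE system of the deterministic scalar LQ Stackelberg
game with leader feedback gain `u₂ = sgn(B₁ y p₂) K`, if `y ≡ 0` on `[0,T]` then
`x ≡ 0` on `[0,T]`, in particular `x(0) = 0`. -/
theorem stmt_10 (T A B₁ B₂ Q₁ Q₂ R₁ R₂ G₁ G₂ K : ℝ) (hT : 0 < T)
    (hR₁ : 0 < R₁) (hR₂ : 0 < R₂) (hG₁ : 0 < G₁) (hG₂ : 0 < G₂) (hQ₁ : 0 < Q₁)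
    (hB₂ : B₂ ≠ 0)
    (x p₂ y p₁ u₁ u₂ : ℝ → ℝ)
    (hu₂ : ∀ s, u₂ s = Real.sign (B₁ * y s * p₂ s) * K)
    (hu₁ : ∀ s, u₁ s = u₂ s * x s - R₁⁻¹ * B₁ * p₁ s)
    (hx : ∀ s ∈ Set.Icc (0 : ℝ) T,
      HasDerivAt x ((A + B₁ * u₂ s) * x s + B₁ * u₁ s - B₂ ^ 2 * R₂⁻¹ * p₂ s) s)
    (hp₂ : ∀ s ∈ Set.Icc (0 : ℝ) T,
      HasDerivAt p₂ (-((A + B₁ * u₂ s) * p₂ s) - Q₂ * x s) s)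
    (hy : ∀ s ∈ Set.Icc (0 : ℝ) T,
      HasDerivAt y ((A + B₁ * u₂ s) * y s + B₂ ^ 2 * R₂⁻¹ * p₁ s) s)
    (hp₁ : ∀ s ∈ Set.Icc (0 : ℝ) T,
      HasDerivAt p₁ (-((A + B₁ * u₂ s) * p₁ s) + Q₂ * y s - Q₁ * x s
        - R₁ * u₂ s * (u₂ s * x s + u₁ s)) s)
    (hTp₁ : p₁ T = -G₂ * y T + G₁ * x T)
    (hTp₂ : p₂ T = G₂ * x T)
    (hy0 : ∀ s ∈ Set.Icc (0 : ℝ) T, y s = 0) :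
    (∀ s ∈ Set.Icc (0 : ℝ) T, x s = 0) ∧ x 0 = 0 := by
  have hu₂0 : ∀ s ∈ Set.Icc (0 : ℝ) T, u₂ s = 0 := by
    intro s hs
    rw [hu₂ s, hy0 s hs]
    simp
  -- p₁ = 0 on the interior, since y' = 0 there
  have hp₁i : ∀ s ∈ Set.Ioo (0 : ℝ) T, p₁ s = 0 := by
    intro s hs
    have hsI := Set.Ioo_subset_Icc_self hs
    have hd := aux_deriv_zero hs hy0 (hy s hsI)
    rw [hy0 s hsI] at hd
    have hB : B₂ ^ 2 * R₂⁻¹ ≠ 0 := mul_ne_zero (pow_ne_zero _ hB₂) (inv_ne_zero hR₂.ne')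
    have : B₂ ^ 2 * R₂⁻¹ * p₁ s = 0 := by linarith
    exact (mul_eq_zero.mp this).resolve_left hB
  have hp₁c : ∀ s ∈ Set.Icc (0 : ℝ) T, ContinuousAt p₁ s := fun s hs =>
    (hp₁ s hs).continuousAt
  have hp₁0 : ∀ s ∈ Set.Icc (0 : ℝ) T, p₁ s = 0 := aux_zero_Icc hT hp₁c hp₁i
  -- x = 0 on the interior, since p₁' = 0 there
  have hxi : ∀ s ∈ Set.Ioo (0 : ℝ) T, x s = 0 := by
    intro s hs
    have hsI := Set.Ioo_subset_Icc_self hs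
    have hd := aux_deriv_zero hs hp₁0 (hp₁ s hsI)
    rw [hp₁0 s hsI, hy0 s hsI, hu₂0 s hsI] at hd
    simp at hd
    have := hQ₁.ne'
    rcases hd with h | h
    · exact absurd h this
    · exact h
  have hxc : ∀ s ∈ Set.Icc (0 : ℝ) T, ContinuousAt x s := fun s hs =>
    (hx s hs).continuousAt
  have hx0 : ∀ s ∈ Set.Icc (0 : ℝ) T, x s = 0 := aux_zero_Icc hT hxc hxi
  exact ⟨hx0, hx0 0 (Set.left_mem_Icc.mpr hT.le)⟩
end

section
/- Let n ∈ ℕ, let t₀ < T be reals, and let N : [t₀,T] → ℝ^{n×n} be continuous with N(s) symmetric positive semidefinite for every s ∈ [t₀,T]. Let Ψ : [t₀,T] → ℝ^{n×n} be differentiable with Ψ(t₀) = I and Ψ'(s) = −N(s)Ψ(s) for all s ∈ [t₀,T]. Then Tr(Ψ(s)ᵀΨ(s)) ≤ n for all s ∈ [t₀,T]; in particular the Frobenius norm of Ψ(s) is at most √n. -/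
open Matrix

/-- Bound on the fundamental solution of the matrix ODE `Ψ' = −NΨ`, `Ψ(t₀) = I`,
with `N` continuous and positive semidefinite on `[t₀,T]`:
`Tr(ΨᵀΨ) ≤ n`, i.e. the Frobenius norm of `Ψ(s)` is at most `√n`. -/
theorem stmt_11 (n : ℕ) (t₀ T : ℝ) (h : t₀ < T)
    (N Ψ : ℝ → Matrix (Fin n) (Fin n) ℝ)
    (hNcont : ∀ i j, ContinuousOn (fun s => N s i j) (Set.Icc t₀ T))
    (hNpsd : ∀ s ∈ Set.Icc t₀ T, (N s).PosSemidef)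
    (hΨ0 : Ψ t₀ = 1)
    (hΨ : ∀ s ∈ Set.Icc t₀ T, ∀ i j,
      HasDerivWithinAt (fun r => Ψ r i j) ((-(N s * Ψ s)) i j) (Set.Icc t₀ T) s) :
    ∀ s ∈ Set.Icc t₀ T,
      Matrix.trace ((Ψ s)ᵀ * Ψ s) ≤ (n : ℝ) ∧
      Real.sqrt (Matrix.trace ((Ψ s)ᵀ * Ψ s)) ≤ Real.sqrt n := by
  set D := Set.Icc t₀ T with hD
  have hDconv : Convex ℝ D := convex_Icc _ _
  have hIcc : interior D ⊆ D := interior_subset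
  -- f s = trace (Ψ s ᵀ * Ψ s) as a double sum
  have hf_eq : ∀ s, Matrix.trace ((Ψ s)ᵀ * Ψ s)
      = ∑ i : Fin n, ∑ j : Fin n, Ψ s j i * Ψ s j i := by
    intro s
    simp [Matrix.trace, Matrix.mul_apply, Matrix.diag, Matrix.transpose_apply]
  set f : ℝ → ℝ := fun s => ∑ i : Fin n, ∑ j : Fin n, Ψ s j i * Ψ s j i with hfdef
  set f' : ℝ → ℝ := fun s => ∑ i : Fin n, ∑ j : Fin n,
      ((-(N s * Ψ s)) j i * Ψ s j i + Ψ s j i * (-(N s * Ψ s)) j i) with hf'def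
  have hderiv : ∀ s ∈ D, HasDerivWithinAt f (f' s) D s := by
    intro s hs
    exact HasDerivWithinAt.fun_sum fun i _ => HasDerivWithinAt.fun_sum fun j _ =>
      (hΨ s hs j i).mul (hΨ s hs j i)
  have hcont : ContinuousOn f D := by
    apply continuousOn_finset_sum
    intro i _
    apply continuousOn_finset_sum
    intro j _
    have hc : ContinuousOn (fun r => Ψ r j i) D := fun s hs => (hΨ s hs j i).continuousWithinAt
    exact hc.mul hc
  have hf'le : ∀ s ∈ D, f' s ≤ 0 := by
    intro s hs
    have : f' s = ∑ i : Fin n, (-2) * ((fun j => Ψ s j i) ⬝ᵥ (N s) *ᵥ (fun j => Ψ s j i)) := by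
      rw [hf'def]
      apply Finset.sum_congr rfl
      intro i _
      rw [dotProduct, Finset.mul_sum]
      apply Finset.sum_congr rfl
      intro j _
      simp only [Matrix.mulVec, Matrix.mul_apply, dotProduct, Matrix.neg_apply]
      ring
    rw [this]
    apply Finset.sum_nonpos
    intro i _
    have hpos : 0 ≤ (fun j => Ψ s j i) ⬝ᵥ (N s) *ᵥ (fun j => Ψ s j i) := by
      have := (hNpsd s hs).dotProduct_mulVec_nonneg (fun j => Ψ s j i)
      simpa using this
    nlinarith
  have hanti : AntitoneOn f D :=
    antitoneOn_of_hasDerivWithinAt_nonpos hDconv hcont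
      (fun s hs => ((hderiv s (hIcc hs)).mono hIcc)) (fun s hs => hf'le s (hIcc hs))
  intro s hs
  have ht0 : t₀ ∈ D := Set.left_mem_Icc.2 h.le
  have hle : f s ≤ f t₀ := hanti ht0 hs hs.1
  have hft0 : f t₀ = (n : ℝ) := by
    rw [hfdef]
    simp [hΨ0, Matrix.one_apply]
  have h1 : Matrix.trace ((Ψ s)ᵀ * Ψ s) ≤ (n : ℝ) := by
    rw [hf_eq]; rw [hft0] at hle; exact hle
  exact ⟨h1, Real.sqrt_le_sqrt h1⟩
end

section
/- Let n, m₁, m₂ ∈ ℕ, δ > 0, M > 0, and fix matrices B₁, D₁ ∈ ℝ^{n×m₁}, B₂, D₂ ∈ ℝ^{n×m₂}, and R₂ ∈ Sym_{m₂}(ℝ) with R₂ ⪰ δI. Then there exists a constant C > 0, depending only on δ, M, and the norms of B₁, B₂, D₁, D₂, R₂, such that for all symmetric positive semidefinite P₂, P₂' ∈ ℝ^{n×n} with ‖P₂‖ ≤ M and ‖P₂'‖ ≤ M, one has ‖𝐁(P₂) − 𝐁(P₂')‖ ≤ C‖P₂ − P₂'‖ and ‖𝐃(P₂) − 𝐃(P₂')‖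 ≤ C‖P₂ − P₂'‖. -/
open Matrix

noncomputable section

/-- `𝐁(P₂) = B₁ − B₂(R₂+D₂ᵀP₂D₂)⁻¹D₂ᵀP₂D₁`. -/
def Bbold {n m1 m2 : ℕ} (B1 D1 : Matrix (Fin n) (Fin m1) ℝ)
    (B2 D2 : Matrix (Fin n) (Fin m2) ℝ) (R2 : Matrix (Fin m2) (Fin m2) ℝ)
    (P2 : Matrix (Fin n) (Fin n) ℝ) : Matrix (Fin n) (Fin m1) ℝ :=
  B1 - B2 * (R2 + D2ᵀ * P2 * D2)⁻¹ * D2ᵀ * P2 * D1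

/-- `𝐃(P₂) = D₁ − D₂(R₂+D₂ᵀP₂D₂)⁻¹D₂ᵀP₂D₁`. -/
def Dbold {n m1 m2 : ℕ} (D1 : Matrix (Fin n) (Fin m1) ℝ)
    (D2 : Matrix (Fin n) (Fin m2) ℝ) (R2 : Matrix (Fin m2) (Fin m2) ℝ)
    (P2 : Matrix (Fin n) (Fin n) ℝ) : Matrix (Fin n) (Fin m1) ℝ :=
  D1 - D2 * (R2 + D2ᵀ * P2 * D2)⁻¹ * D2ᵀ * P2 * D1

attribute [local instance] Matrix.frobeniusSeminormedAddCommGroup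
  Matrix.frobeniusNormedAddCommGroup

lemma fnorm_eq {a b : ℕ} (A : Matrix (Fin a) (Fin b) ℝ) : fnorm A = ‖A‖ := by
  rw [fnorm, Matrix.frobenius_norm_def, Real.sqrt_eq_rpow]
  congr 1
  refine Finset.sum_congr rfl fun i _ => Finset.sum_congr rfl fun j _ => ?_
  rw [Real.rpow_two, Real.norm_eq_abs, sq_abs]

lemma quad_single {k : ℕ} (A : Matrix (Fin k) (Fin k) ℝ) (i j : Fin k) :
    Pi.single i (1:ℝ) ⬝ᵥ A *ᵥ Pi.single j 1 = A i j := by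
  simp [Matrix.mulVec_single, single_dotProduct]

lemma entry_le {k : ℕ} {A : Matrix (Fin k) (Fin k) ℝ} {c : ℝ}
    (hA : A.PosSemidef) (hc : (c • (1 : Matrix (Fin k) (Fin k) ℝ) - A).PosSemidef)
    (i j : Fin k) : |A i j| ≤ c := by
  have hsym : A j i = A i j := by
    have := congrFun (congrFun hA.1.eq j) i
    simpa [Matrix.conjTranspose_apply] using this.symm
  have hq : ∀ x : Fin k → ℝ, 0 ≤ x ⬝ᵥ A *ᵥ x := fun x => by simpa using hA.dotProduct_mulVec_nonneg x
  have hq' : ∀ x : Fin k → ℝ, x ⬝ᵥ A *ᵥ x ≤ c * (x ⬝ᵥ x) := fun x => by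
    have := hc.dotProduct_mulVec_nonneg x
    simp only [star_trivial, Matrix.sub_mulVec, Matrix.smul_mulVec, Matrix.one_mulVec,
      dotProduct_sub, dotProduct_smul, smul_eq_mul] at this
    linarith
  have diag : ∀ l, A l l ≤ c := fun l => by
    have := hq' (Pi.single l 1)
    simpa [quad_single, single_dotProduct] using this
  have diag0 : ∀ l, 0 ≤ A l l := fun l => by simpa [quad_single] using hq (Pi.single l 1)
  by_cases hij : i = j
  · subst hij
    exact abs_le.mpr ⟨by linarith [diag0 i, diag i], diag i⟩
  · have h1 := hq (Pi.single i 1 + Pi.single j 1)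
    have h2 := hq (Pi.single i 1 - Pi.single j 1)
    simp only [Matrix.mulVec_add, Matrix.mulVec_sub, dotProduct_add,
      dotProduct_sub, add_dotProduct, sub_dotProduct, quad_single] at h1 h2
    exact abs_le.mpr ⟨by linarith [diag i, diag j], by linarith [diag i, diag j]⟩

lemma fnorm_le_of_le {k : ℕ} {A : Matrix (Fin k) (Fin k) ℝ} {c : ℝ} (hc0 : 0 ≤ c)
    (hA : A.PosSemidef) (hc : (c • (1 : Matrix (Fin k) (Fin k) ℝ) - A).PosSemidef) :
    ‖A‖ ≤ (k : ℝ) * c := by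
  rw [Matrix.frobenius_norm_def]
  have hsum : (∑ i, ∑ j, ‖A i j‖ ^ (2:ℝ)) ≤ ((k:ℝ) * c) ^ 2 := by
    have : (∑ i : Fin k, ∑ j : Fin k, ‖A i j‖ ^ (2:ℝ)) ≤ ∑ _i : Fin k, ∑ _j : Fin k, c ^ 2 := by
      refine Finset.sum_le_sum fun i _ => Finset.sum_le_sum fun j _ => ?_
      rw [Real.rpow_two, Real.norm_eq_abs]
      have := entry_le hA hc i j
      nlinarith [abs_nonneg (A i j)]
    simpa [Finset.sum_const, mul_pow] using this.trans (le_of_eq (by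
      simp [Finset.sum_const]; ring))
  calc (∑ i, ∑ j, ‖A i j‖ ^ (2:ℝ)) ^ (1/2 : ℝ)
      ≤ (((k:ℝ) * c) ^ 2) ^ (1/2 : ℝ) := by
        apply Real.rpow_le_rpow (by positivity) hsum (by norm_num)
    _ = (k:ℝ) * c := by
        rw [← Real.sqrt_eq_rpow, Real.sqrt_sq (by positivity)]

lemma inv_loewner {k : ℕ} {A : Matrix (Fin k) (Fin k) ℝ} {δ : ℝ} (hδ : 0 < δ)
    (hA : A.PosDef) (h : (A - δ • (1 : Matrix (Fin k) (Fin k) ℝ)).PosSemidef) :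
    (δ⁻¹ • (1 : Matrix (Fin k) (Fin k) ℝ) - A⁻¹).PosSemidef := by
  have hdet : IsUnit A.det := A.isUnit_iff_isUnit_det.mp hA.isUnit
  have hAinv := hA.inv
  refine Matrix.PosSemidef.of_dotProduct_mulVec_nonneg ?_ ?_
  · simp only [Matrix.IsHermitian, Matrix.conjTranspose_sub, Matrix.conjTranspose_smul,
      Matrix.conjTranspose_one, hAinv.1.eq, star_trivial]
  · intro x
    simp only [star_trivial, Matrix.sub_mulVec, Matrix.smul_mulVec, Matrix.one_mulVec,
      dotProduct_sub, dotProduct_smul, smul_eq_mul]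
    set y := A⁻¹ *ᵥ x with hy
    have hx : A *ᵥ y = x := by
      rw [hy, Matrix.mulVec_mulVec, Matrix.mul_nonsing_inv _ hdet, Matrix.one_mulVec]
    have hq0 : 0 ≤ y ⬝ᵥ A *ᵥ y := by simpa using hA.posSemidef.dotProduct_mulVec_nonneg y
    have key : y ⬝ᵥ A *ᵥ y = x ⬝ᵥ y := by
      rw [← hx, dotProduct_comm]
    have hδy : δ * (y ⬝ᵥ y) ≤ y ⬝ᵥ A *ᵥ y := by
      have := h.dotProduct_mulVec_nonneg y
      simp only [star_trivial, Matrix.sub_mulVec, Matrix.smul_mulVec, Matrix.one_mulVec,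
        dotProduct_sub, dotProduct_smul, smul_eq_mul] at this
      linarith
    have hcs : (x ⬝ᵥ y) ^ 2 ≤ (x ⬝ᵥ x) * (y ⬝ᵥ y) := by
      have := Finset.sum_mul_sq_le_sq_mul_sq Finset.univ x y
      simpa [dotProduct, sq] using this
    have hxx : 0 ≤ x ⬝ᵥ x := Finset.sum_nonneg fun i _ => mul_self_nonneg (x i)
    have hyy : 0 ≤ y ⬝ᵥ y := Finset.sum_nonneg fun i _ => mul_self_nonneg (y i)
    have hq0' : 0 ≤ x ⬝ᵥ y := key ▸ hq0
    rcases eq_or_lt_of_le hq0' with hq | hq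
    · have : 0 ≤ δ⁻¹ * (x ⬝ᵥ x) := by positivity
      linarith [hq.symm ▸ this]
    · have h1 : δ * (x ⬝ᵥ y) ≤ x ⬝ᵥ x := by nlinarith [key, hδy, hcs]
      have h2 : x ⬝ᵥ y ≤ δ⁻¹ * (x ⬝ᵥ x) := by
        have := mul_le_mul_of_nonneg_left h1 (le_of_lt (inv_pos.mpr hδ))
        calc x ⬝ᵥ y = δ⁻¹ * (δ * (x ⬝ᵥ y)) := by field_simp
          _ ≤ δ⁻¹ * (x ⬝ᵥ x) := this
      linarith

lemma S_posdef {n m2 : ℕ} {δ : ℝ} (hδ : 0 < δ)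
    (D2 : Matrix (Fin n) (Fin m2) ℝ) (R2 : Matrix (Fin m2) (Fin m2) ℝ)
    (hR2 : (R2 - δ • (1 : Matrix (Fin m2) (Fin m2) ℝ)).PosSemidef)
    {P : Matrix (Fin n) (Fin n) ℝ} (hP : P.PosSemidef) :
    (R2 + D2ᵀ * P * D2).PosDef ∧
      ((R2 + D2ᵀ * P * D2) - δ • (1 : Matrix (Fin m2) (Fin m2) ℝ)).PosSemidef := by
  have hD : (D2ᵀ * P * D2).PosSemidef := by
    have := hP.conjTranspose_mul_mul_same D2
    rwa [Matrix.conjTranspose_eq_transpose_of_trivial] at this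
  have hsum : ((R2 - δ • (1 : Matrix (Fin m2) (Fin m2) ℝ)) + D2ᵀ * P * D2).PosSemidef :=
    hR2.add hD
  have hone : (δ • (1 : Matrix (Fin m2) (Fin m2) ℝ)).PosDef := by
    rw [Matrix.smul_one_eq_diagonal]
    exact Matrix.PosDef.diagonal fun i => hδ
  constructor
  · have : R2 + D2ᵀ * P * D2 =
        δ • (1 : Matrix (Fin m2) (Fin m2) ℝ) + ((R2 - δ • 1) + D2ᵀ * P * D2) := by abel
    rw [this]
    exact hone.add_posSemidef hsum
  · have : (R2 + D2ᵀ * P * D2) - δ • (1 : Matrix (Fin m2) (Fin m2) ℝ) =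
        (R2 - δ • 1) + D2ᵀ * P * D2 := by abel
    rw [this]; exact hsum

lemma nmul_le {a b c : ℕ} {A : Matrix (Fin a) (Fin b) ℝ} {B : Matrix (Fin b) (Fin c) ℝ} {x y : ℝ}
    (hA : ‖A‖ ≤ x) (hB : ‖B‖ ≤ y) : ‖A * B‖ ≤ x * y :=
  le_trans (Matrix.frobenius_norm_mul A B)
    (mul_le_mul hA hB (norm_nonneg _) (le_trans (norm_nonneg _) hA))

set_option maxHeartbeats 1000000

/-- Local Lipschitz estimates for the modified coefficient maps `𝐁` and `𝐃` on the
set of positive semidefinite matrices of norm at most `M`. -/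
theorem stmt_14 (n m1 m2 : ℕ) (δ M : ℝ) (hδ : 0 < δ) (hM : 0 < M)
    (B1 D1 : Matrix (Fin n) (Fin m1) ℝ) (B2 D2 : Matrix (Fin n) (Fin m2) ℝ)
    (R2 : Matrix (Fin m2) (Fin m2) ℝ) (hR2symm : R2.IsSymm)
    (hR2 : (R2 - δ • (1 : Matrix (Fin m2) (Fin m2) ℝ)).PosSemidef) :
    ∃ C : ℝ, 0 < C ∧ ∀ P2 P2' : Matrix (Fin n) (Fin n) ℝ,
      P2.PosSemidef → P2'.PosSemidef → fnorm P2 ≤ M → fnorm P2' ≤ M →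
        fnorm (Bbold B1 D1 B2 D2 R2 P2 - Bbold B1 D1 B2 D2 R2 P2') ≤ C * fnorm (P2 - P2') ∧
        fnorm (Dbold D1 D2 R2 P2 - Dbold D1 D2 R2 P2') ≤ C * fnorm (P2 - P2') := by
  set N : ℝ := (m2 : ℝ) * δ⁻¹ with hN
  have hN0 : 0 ≤ N := by positivity
  set d1 : ℝ := ‖D1‖
  set d2 : ℝ := ‖D2‖
  set b2 : ℝ := ‖B2‖
  have hd1 : 0 ≤ d1 := norm_nonneg _
  have hd2 : 0 ≤ d2 := norm_nonneg _
  have hb2 : 0 ≤ b2 := norm_nonneg _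
  set L : ℝ := N * d2 * d1 + N * (d2 * d2) * (N * (d2 * (M * d1))) with hL
  have hL0 : 0 ≤ L := by positivity
  refine ⟨(b2 + d2 + 1) * (L + 1), by positivity, ?_⟩
  have hD2t : ‖D2ᵀ‖ = d2 := Matrix.frobenius_norm_transpose D2
  -- uniform bound on inverses
  have inv_bound : ∀ P : Matrix (Fin n) (Fin n) ℝ, P.PosSemidef →
      ‖(R2 + D2ᵀ * P * D2)⁻¹‖ ≤ N := by
    intro P hP
    obtain ⟨hpd, hps⟩ := S_posdef hδ D2 R2 hR2 hP
    have h1 := inv_loewner hδ hpd hps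
    exact fnorm_le_of_le (le_of_lt (inv_pos.mpr hδ)) hpd.inv.posSemidef h1
  -- main estimate on the common factor
  have main : ∀ P Q : Matrix (Fin n) (Fin n) ℝ, P.PosSemidef → Q.PosSemidef →
      ‖P‖ ≤ M → ‖Q‖ ≤ M →
      ‖(R2 + D2ᵀ * P * D2)⁻¹ * D2ᵀ * P * D1 - (R2 + D2ᵀ * Q * D2)⁻¹ * D2ᵀ * Q * D1‖
        ≤ L * ‖P - Q‖ := by
    intro P Q hP hQ hPM hQM
    set SP := R2 + D2ᵀ * P * D2 with hSP
    set SQ := R2 + D2ᵀ * Q * D2 with hSQ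
    have hdP : IsUnit SP.det := SP.isUnit_iff_isUnit_det.mp (S_posdef hδ D2 R2 hR2 hP).1.isUnit
    have hdQ : IsUnit SQ.det := SQ.isUnit_iff_isUnit_det.mp (S_posdef hδ D2 R2 hR2 hQ).1.isUnit
    have hPinv : SP⁻¹ * SP = 1 := Matrix.nonsing_inv_mul _ hdP
    have hQinv : SQ * SQ⁻¹ = 1 := Matrix.mul_nonsing_inv _ hdQ
    have hdiff : SP⁻¹ - SQ⁻¹ = SP⁻¹ * (D2ᵀ * ((Q - P) * D2)) * SQ⁻¹ := by
      have hSd : SQ - SP = D2ᵀ * ((Q - P) * D2) := by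
        rw [hSP, hSQ]
        simp only [Matrix.mul_sub, Matrix.sub_mul, Matrix.mul_assoc]
        abel
      have : SP⁻¹ * (D2ᵀ * ((Q - P) * D2)) * SQ⁻¹
          = SP⁻¹ * (SQ * SQ⁻¹) - SP⁻¹ * SP * SQ⁻¹ := by
        rw [← hSd]
        simp only [Matrix.mul_sub, Matrix.sub_mul, Matrix.mul_assoc]
      rw [this, hQinv, hPinv, Matrix.mul_one, Matrix.one_mul]
    have hid : SP⁻¹ * D2ᵀ * P * D1 - SQ⁻¹ * D2ᵀ * Q * D1
        = SP⁻¹ * (D2ᵀ * ((P - Q) * D1))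
          + SP⁻¹ * ((D2ᵀ * ((Q - P) * D2)) * (SQ⁻¹ * (D2ᵀ * (Q * D1)))) := by
      have step1 : SP⁻¹ * D2ᵀ * P * D1 - SQ⁻¹ * D2ᵀ * Q * D1
          = SP⁻¹ * (D2ᵀ * ((P - Q) * D1)) + (SP⁻¹ - SQ⁻¹) * (D2ᵀ * (Q * D1)) := by
        simp only [Matrix.mul_sub, Matrix.sub_mul, Matrix.mul_assoc]
        abel
      rw [step1, hdiff]
      simp only [Matrix.mul_assoc]
    rw [hid]
    have hQP : ‖Q - P‖ = ‖P - Q‖ := norm_sub_rev Q P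
    have t1 : ‖SP⁻¹ * (D2ᵀ * ((P - Q) * D1))‖ ≤ N * (d2 * (‖P - Q‖ * d1)) :=
      nmul_le (inv_bound P hP) (nmul_le (le_of_eq hD2t) (nmul_le le_rfl le_rfl))
    have t2 : ‖SP⁻¹ * ((D2ᵀ * ((Q - P) * D2)) * (SQ⁻¹ * (D2ᵀ * (Q * D1))))‖
        ≤ N * ((d2 * (‖P - Q‖ * d2)) * (N * (d2 * (M * d1)))) :=
      nmul_le (inv_bound P hP)
        (nmul_le (nmul_le (le_of_eq hD2t) (nmul_le (le_of_eq hQP) le_rfl))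
          (nmul_le (inv_bound Q hQ) (nmul_le (le_of_eq hD2t) (nmul_le hQM le_rfl))))
    calc ‖SP⁻¹ * (D2ᵀ * ((P - Q) * D1))
            + SP⁻¹ * ((D2ᵀ * ((Q - P) * D2)) * (SQ⁻¹ * (D2ᵀ * (Q * D1))))‖
        ≤ ‖SP⁻¹ * (D2ᵀ * ((P - Q) * D1))‖
            + ‖SP⁻¹ * ((D2ᵀ * ((Q - P) * D2)) * (SQ⁻¹ * (D2ᵀ * (Q * D1))))‖ := norm_add_le _ _
      _ ≤ N * (d2 * (‖P - Q‖ * d1))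
            + N * ((d2 * (‖P - Q‖ * d2)) * (N * (d2 * (M * d1)))) := add_le_add t1 t2
      _ = L * ‖P - Q‖ := by rw [hL]; ring
  intro P2 P2' hP2 hP2' hP2M hP2'M
  rw [fnorm_eq] at hP2M hP2'M
  have hmain := main P2' P2 hP2' hP2 hP2'M hP2M
  have hPQ : ‖P2' - P2‖ = ‖P2 - P2'‖ := norm_sub_rev _ _
  rw [hPQ] at hmain
  constructor
  · rw [fnorm_eq, fnorm_eq]
    have hBid : Bbold B1 D1 B2 D2 R2 P2 - Bbold B1 D1 B2 D2 R2 P2'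
        = B2 * ((R2 + D2ᵀ * P2' * D2)⁻¹ * D2ᵀ * P2' * D1
            - (R2 + D2ᵀ * P2 * D2)⁻¹ * D2ᵀ * P2 * D1) := by
      rw [Bbold, Bbold]
      simp only [Matrix.mul_sub, Matrix.mul_assoc]
      abel
    rw [hBid]
    have := nmul_le (le_refl b2) hmain
    calc ‖B2 * ((R2 + D2ᵀ * P2' * D2)⁻¹ * D2ᵀ * P2' * D1
            - (R2 + D2ᵀ * P2 * D2)⁻¹ * D2ᵀ * P2 * D1)‖
        ≤ b2 * (L * ‖P2 - P2'‖) := this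
      _ = (b2 * L) * ‖P2 - P2'‖ := by ring
      _ ≤ (b2 + d2 + 1) * (L + 1) * ‖P2 - P2'‖ := by
          have hmul : b2 * L ≤ (b2 + d2 + 1) * (L + 1) := by
            nlinarith [mul_nonneg hd2 hL0, hb2, hd2, hL0]
          exact mul_le_mul_of_nonneg_right hmul (norm_nonneg _)
  · rw [fnorm_eq, fnorm_eq]
    have hDid : Dbold D1 D2 R2 P2 - Dbold D1 D2 R2 P2'
        = D2 * ((R2 + D2ᵀ * P2' * D2)⁻¹ * D2ᵀ * P2' * D1
            - (R2 + D2ᵀ * P2 * D2)⁻¹ * D2ᵀ * P2 * D1) := by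
      rw [Dbold, Dbold]
      simp only [Matrix.mul_sub, Matrix.mul_assoc]
      abel
    rw [hDid]
    have := nmul_le (le_refl d2) hmain
    calc ‖D2 * ((R2 + D2ᵀ * P2' * D2)⁻¹ * D2ᵀ * P2' * D1
            - (R2 + D2ᵀ * P2 * D2)⁻¹ * D2ᵀ * P2 * D1)‖
        ≤ d2 * (L * ‖P2 - P2'‖) := this
      _ = (d2 * L) * ‖P2 - P2'‖ := by ring
      _ ≤ (b2 + d2 + 1) * (L + 1) * ‖P2 - P2'‖ := by
          have hmul : d2 * L ≤ (b2 + d2 + 1) * (L + 1) := by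
            nlinarith [mul_nonneg hb2 hL0, hb2, hd2, hL0]
          exact mul_le_mul_of_nonneg_right hmul (norm_nonneg _)
end
end

section
/- Let P₁, P₂ ∈ ℝ^{n×n} be symmetric positive semidefinite, and fix matrices A, C ∈ ℝ^{n×n}, B₁, D₁ ∈ ℝ^{n×m₁}, B₂, D₂ ∈ ℝ^{n×m₂}, Q₁ ∈ Sym_n(ℝ), R₁ ∈ Sym_{m₁}(ℝ), R₂ ∈ Sym_{m₂}(ℝ) such that R₂ + D₂ᵀP₂D₂ and R₁ + 𝐃(P₂)ᵀP₁𝐃(P₂) are positive definite. Set Θ̄₁ = −(R₁+𝐃(P₂)ᵀP₁𝐃(P₂))⁻¹(𝐁(P₂)ᵀP₁ + 𝐃(P₂)ᵀP₁(C − D₂K(P₂))), Θ₂ = −(R₂+D₂ᵀP₂D₂)⁻¹(B₂ᵀP₂ + D₂ᵀP₂(C + D₁Θ̄₁)), 𝐀 = A + B₁Θ̄₁ + B₂Θ₂, and 𝐂 = C + D₁Θ̄₁ + D₂Θ₂. Then the following matrix identity holds: 𝐀ᵀP₁ + P₁𝐀 + 𝐂ᵀP₁𝐂 + Q₁ + Θ̄₁ᵀR₁Θ̄₁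 = (A − B₂K(P₂))ᵀP₁ + P₁(A − B₂K(P₂)) + (C − D₂K(P₂))ᵀP₁(C − D₂K(P₂)) + Q₁ − Θ̄₁ᵀ(R₁ + 𝐃(P₂)ᵀP₁𝐃(P₂))Θ̄₁. -/
open Matrix

noncomputable section

/-- `K(P₂) = (R₂+D₂ᵀP₂D₂)⁻¹(B₂ᵀP₂+D₂ᵀP₂C)`. -/
def Kmat {n m2 : ℕ} (C : Matrix (Fin n) (Fin n) ℝ) (B2 D2 : Matrix (Fin n) (Fin m2) ℝ)
    (R2 : Matrix (Fin m2) (Fin m2) ℝ) (P2 : Matrix (Fin n) (Fin n) ℝ) :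
    Matrix (Fin m2) (Fin n) ℝ :=
  (R2 + D2ᵀ * P2 * D2)⁻¹ * (B2ᵀ * P2 + D2ᵀ * P2 * C)

/-- The leader's equilibrium gain
`Θ̄₁ = −(R₁+𝐃ᵀP₁𝐃)⁻¹(𝐁ᵀP₁ + 𝐃ᵀP₁(C−D₂K))`. -/
def Theta1 {n m1 m2 : ℕ} (C : Matrix (Fin n) (Fin n) ℝ)
    (B1 D1 : Matrix (Fin n) (Fin m1) ℝ) (B2 D2 : Matrix (Fin n) (Fin m2) ℝ)
    (R1 : Matrix (Fin m1) (Fin m1) ℝ) (R2 : Matrix (Fin m2) (Fin m2) ℝ)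
    (P1 P2 : Matrix (Fin n) (Fin n) ℝ) : Matrix (Fin m1) (Fin n) ℝ :=
  -((R1 + (Dbold D1 D2 R2 P2)ᵀ * P1 * Dbold D1 D2 R2 P2)⁻¹ *
      ((Bbold B1 D1 B2 D2 R2 P2)ᵀ * P1
        + (Dbold D1 D2 R2 P2)ᵀ * P1 * (C - D2 * Kmat C B2 D2 R2 P2)))

/-- The follower's equilibrium gain
`Θ₂ = −(R₂+D₂ᵀP₂D₂)⁻¹(B₂ᵀP₂ + D₂ᵀP₂(C + D₁Θ̄₁))`. -/
def Theta2 {n m1 m2 : ℕ} (C : Matrix (Fin n) (Fin n) ℝ)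
    (B1 D1 : Matrix (Fin n) (Fin m1) ℝ) (B2 D2 : Matrix (Fin n) (Fin m2) ℝ)
    (R1 : Matrix (Fin m1) (Fin m1) ℝ) (R2 : Matrix (Fin m2) (Fin m2) ℝ)
    (P1 P2 : Matrix (Fin n) (Fin n) ℝ) : Matrix (Fin m2) (Fin n) ℝ :=
  -((R2 + D2ᵀ * P2 * D2)⁻¹ *
      (B2ᵀ * P2 + D2ᵀ * P2 * (C + D1 * Theta1 C B1 D1 B2 D2 R1 R2 P1 P2)))

/-- The completed-square identity for the right-hand side of the `P₁`-equation of the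
equilibrium Riccati equation after substituting the leader's equilibrium gain. -/
theorem stmt_17 (n m1 m2 : ℕ) (A C : Matrix (Fin n) (Fin n) ℝ)
    (B1 D1 : Matrix (Fin n) (Fin m1) ℝ) (B2 D2 : Matrix (Fin n) (Fin m2) ℝ)
    (Q1 : Matrix (Fin n) (Fin n) ℝ) (R1 : Matrix (Fin m1) (Fin m1) ℝ)
    (R2 : Matrix (Fin m2) (Fin m2) ℝ) (hQ1 : Q1.IsSymm) (hR1 : R1.IsSymm) (hR2 : R2.IsSymm)
    (P1 P2 : Matrix (Fin n) (Fin n) ℝ) (hP1 : P1.PosSemidef) (hP2 : P2.PosSemidef)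
    (hpd2 : (R2 + D2ᵀ * P2 * D2).PosDef)
    (hpd1 : (R1 + (Dbold D1 D2 R2 P2)ᵀ * P1 * Dbold D1 D2 R2 P2).PosDef) :
    (A + B1 * Theta1 C B1 D1 B2 D2 R1 R2 P1 P2 + B2 * Theta2 C B1 D1 B2 D2 R1 R2 P1 P2)ᵀ * P1
      + P1 * (A + B1 * Theta1 C B1 D1 B2 D2 R1 R2 P1 P2 + B2 * Theta2 C B1 D1 B2 D2 R1 R2 P1 P2)
      + (C + D1 * Theta1 C B1 D1 B2 D2 R1 R2 P1 P2 + D2 * Theta2 C B1 D1 B2 D2 R1 R2 P1 P2)ᵀ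
          * P1 * (C + D1 * Theta1 C B1 D1 B2 D2 R1 R2 P1 P2 + D2 * Theta2 C B1 D1 B2 D2 R1 R2 P1 P2)
      + Q1 + (Theta1 C B1 D1 B2 D2 R1 R2 P1 P2)ᵀ * R1 * Theta1 C B1 D1 B2 D2 R1 R2 P1 P2
    = (A - B2 * Kmat C B2 D2 R2 P2)ᵀ * P1 + P1 * (A - B2 * Kmat C B2 D2 R2 P2)
      + (C - D2 * Kmat C B2 D2 R2 P2)ᵀ * P1 * (C - D2 * Kmat C B2 D2 R2 P2)
      + Q1 - (Theta1 C B1 D1 B2 D2 R1 R2 P1 P2)ᵀ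
          * (R1 + (Dbold D1 D2 R2 P2)ᵀ * P1 * Dbold D1 D2 R2 P2)
          * Theta1 C B1 D1 B2 D2 R1 R2 P1 P2 := by

  -- abbreviations
  set S : Matrix (Fin m2) (Fin m2) ℝ := R2 + D2ᵀ * P2 * D2 with hSdef
  set K := Kmat C B2 D2 R2 P2 with hKdef
  set Bb := Bbold B1 D1 B2 D2 R2 P2 with hBbdef
  set Db := Dbold D1 D2 R2 P2 with hDbdef
  set Θ1 := Theta1 C B1 D1 B2 D2 R1 R2 P1 P2 with hT1def
  set Θ2 := Theta2 C B1 D1 B2 D2 R1 R2 P1 P2 with hT2def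
  set M : Matrix (Fin m1) (Fin m1) ℝ := R1 + Dbᵀ * P1 * Db with hMdef
  have hP1s : P1ᵀ = P1 := hP1.isHermitian
  have hSu : IsUnit S.det := isUnit_iff_ne_zero.mpr hpd2.det_pos.ne'
  have hMu : IsUnit M.det := isUnit_iff_ne_zero.mpr hpd1.det_pos.ne'
  have hMs : Mᵀ = M := by
    rw [hMdef, Matrix.transpose_add, Matrix.transpose_mul, Matrix.transpose_mul,
      Matrix.transpose_transpose, hP1s, hR1.eq, Matrix.mul_assoc]
  set Y := C - D2 * K with hYdef
  set L := Bbᵀ * P1 + Dbᵀ * (P1 * Y) with hLdef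
  have hMT : M * Θ1 = -L := by
    rw [hT1def, Theta1, ← hKdef, ← hBbdef, ← hDbdef, ← hYdef, ← hMdef, Matrix.mul_neg,
      ← Matrix.mul_assoc, Matrix.mul_nonsing_inv _ hMu, Matrix.one_mul, hLdef,
      Matrix.mul_assoc]
  have hTM : Θ1ᵀ * M = -Lᵀ := by
    have := congrArg Matrix.transpose hMT
    rw [Matrix.transpose_mul, hMs, Matrix.transpose_neg] at this
    exact this
  have hTh2 : Θ2 = -K - S⁻¹ * (D2ᵀ * (P2 * (D1 * Θ1))) := by
    rw [hT2def, Theta2, ← hT1def, ← hSdef, hKdef, Kmat, ← hSdef]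
    simp only [Matrix.mul_add, Matrix.mul_assoc, neg_add, sub_eq_add_neg]
    abel
  have hB : B1 * Θ1 + B2 * Θ2 = Bb * Θ1 - B2 * K := by
    rw [hTh2, hBbdef, Bbold, ← hSdef]
    simp only [Matrix.sub_mul, Matrix.mul_sub, Matrix.mul_neg, Matrix.mul_assoc]
    abel
  have hD : D1 * Θ1 + D2 * Θ2 = Db * Θ1 - D2 * K := by
    rw [hTh2, hDbdef, Dbold, ← hSdef]
    simp only [Matrix.sub_mul, Matrix.mul_sub, Matrix.mul_neg, Matrix.mul_assoc]
    abel
  have hA' : A + B1 * Θ1 + B2 * Θ2 = (A - B2 * K) + Bb * Θ1 := by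
    rw [add_assoc, hB]; abel
  have hC' : C + D1 * Θ1 + D2 * Θ2 = Y + Db * Θ1 := by
    rw [add_assoc, hD, hYdef]; abel
  rw [hA', hC']
  have hkey : Θ1ᵀ * (M * Θ1) = -(Θ1ᵀ * L) := by rw [hMT, Matrix.mul_neg]
  have hkey2 : Θ1ᵀ * (M * Θ1) = -(Lᵀ * Θ1) := by
    rw [← Matrix.mul_assoc, hTM, Matrix.neg_mul]
  rw [eq_sub_iff_add_eq]
  have expand : (A - B2 * K + Bb * Θ1)ᵀ * P1 + P1 * (A - B2 * K + Bb * Θ1)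
      + (Y + Db * Θ1)ᵀ * P1 * (Y + Db * Θ1) + Q1 + Θ1ᵀ * R1 * Θ1 + Θ1ᵀ * M * Θ1
      = ((A - B2 * K)ᵀ * P1 + P1 * (A - B2 * K) + Yᵀ * P1 * Y + Q1)
        + ((Θ1ᵀ * L + Lᵀ * Θ1) + (Θ1ᵀ * (M * Θ1) + Θ1ᵀ * (M * Θ1))) := by
    rw [hLdef, hMdef]
    have hLt : (Bbᵀ * P1 + Dbᵀ * (P1 * Y))ᵀ = P1 * Bb + Yᵀ * (P1 * Db) := by
      simp only [Matrix.transpose_add, Matrix.transpose_mul, Matrix.transpose_transpose, hP1s]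
      rw [Matrix.mul_assoc]
    rw [hLt]
    simp only [Matrix.add_mul, Matrix.mul_add, Matrix.transpose_add, Matrix.transpose_mul,
      Matrix.mul_assoc]
    abel
  have hsum : Θ1ᵀ * L + Lᵀ * Θ1 + (Θ1ᵀ * (M * Θ1) + Θ1ᵀ * (M * Θ1)) = 0 := by
    nth_rewrite 2 [hkey2]
    rw [hkey]
    abel
  rw [expand, hsum, add_zero]
end
end
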